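/- arXiv:2412.05177 — 14 statements merged into one kernel-verified Lean document; each statement's English description precedes it below -/
import Mathlib

section
/- Let g : W → ℝ be a bounded function satisfying the G-inequality, and let h be its associated map. Then h satisfies the triangle inequality on M × M, i.e. h(x,y) ≤ h(x,u) + h(u,y) for all x, u, y ∈ M. -/
/-- `Wt M` is the set `W = {(x,y) ∈ M × M : x ≠ y}`. -/
abbrev Wt (M : Type*) [MetricSpace M] := {p : M × M // p.1 ≠ p.2}

/-- `g : W → ℝ` satisfies the G-inequality. -/
def GIneq {M : Type*} [MetricSpace M] (g : Wt M → ℝ) : Prop :=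
  ∀ (x u y : M) (hxu : x ≠ u) (huy : u ≠ y) (hxy : x ≠ y),
    dist x y * g ⟨(x, y), hxy⟩ ≤ dist x u * g ⟨(x, u), hxu⟩ + dist u y * g ⟨(u, y), huy⟩

open Classical in
/-- The associated map `h` of `g`. -/
noncomputable def assocMap {M : Type*} [MetricSpace M] (g : Wt M → ℝ) : M × M → ℝ :=
  fun p => if h : p.1 ≠ p.2 then dist p.1 p.2 * g ⟨p, h⟩ else 0

theorem stmt0 {M : Type*} [MetricSpace M]
    (h3 : ∃ x y z : M, x ≠ y ∧ x ≠ z ∧ y ≠ z)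
    (g : Wt M → ℝ) (hb : ∃ C : ℝ, ∀ p, |g p| ≤ C) (hG : GIneq g) :
    ∀ x u y : M, assocMap g (x, y) ≤ assocMap g (x, u) + assocMap g (u, y) := by
  have heq : ∀ (x y : M) (h : x ≠ y), assocMap g (x, y) = dist x y * g ⟨(x, y), h⟩ := by
    intro x y h
    simp only [assocMap]
    rw [dif_pos h]
  have hzero : ∀ x : M, assocMap g (x, x) = 0 := by
    intro x
    simp only [assocMap]
    rw [dif_neg (by simp)]
  have key : ∀ x u : M, x ≠ u → 0 ≤ assocMap g (x, u) + assocMap g (u, x) := by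
    intro x u hxu
    obtain ⟨z, hzx, hzu⟩ : ∃ z : M, z ≠ x ∧ z ≠ u := by
      by_contra hc
      push_neg at hc
      obtain ⟨a, b, c, hab, hac, hbc⟩ := h3
      have ha : a = x ∨ a = u := or_iff_not_imp_left.mpr (hc a)
      have hbb : b = x ∨ b = u := or_iff_not_imp_left.mpr (hc b)
      have hcc : c = x ∨ c = u := or_iff_not_imp_left.mpr (hc c)
      rcases ha with rfl | rfl <;> rcases hbb with h1 | h1 <;>
        rcases hcc with h2 | h2 <;> simp_all
    have h1 := hG x u z hxu (Ne.symm hzu) (Ne.symm hzx)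
    have h2 := hG u x z hxu.symm (Ne.symm hzx) (Ne.symm hzu)
    rw [heq x u hxu, heq u x hxu.symm]
    linarith
  intro x u y
  by_cases hxy : x = y
  · subst hxy
    rw [hzero x]
    by_cases hxu : x = u
    · subst hxu; rw [hzero x]; linarith
    · exact key x u hxu
  · by_cases hxu : x = u
    · subst hxu; rw [hzero x]; linarith
    · by_cases huy : u = y
      · subst huy; rw [hzero u]; linarith
      · rw [heq x y hxy, heq x u hxu, heq u y huy]
        exact hG x u y hxu huy hxy
end

section
/- Let g : W → ℝ be a bounded function satisfying the G-inequality, and let h be its associated map. Then h is Lipschitz with constant ‖g‖∞ := sup_{(x,y)∈W} |g(x,y)| with respect to the metric 𝑑̃((x,y),(u,v)) = d(x,u) + d(y,v) on M × M, i.e. |h(x,y) − h(u,v)| ≤ ‖g‖∞ · (d(x,u) + d(y,v)) for all (x,y),(u,v) ∈ M × M. In particular, g is continuous on W (with the subspace topology of M × M). -/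
theorem stmt1 {M : Type*} [MetricSpace M]
    (h3 : ∃ x y z : M, x ≠ y ∧ x ≠ z ∧ y ≠ z)
    (g : Wt M → ℝ) (hb : ∃ C : ℝ, ∀ p, |g p| ≤ C) (hG : GIneq g) :
    (∀ p q : M × M,
      |assocMap g p - assocMap g q| ≤ (⨆ w : Wt M, |g w|) * (dist p.1 q.1 + dist p.2 q.2)) ∧
    Continuous g := by
  obtain ⟨C, hC⟩ := hb
  obtain ⟨a, b, c, hab, hac, hbc⟩ := h3
  set S := ⨆ w : Wt M, |g w| with hSdef
  have hBdd : BddAbove (Set.range fun w : Wt M => |g w|) :=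
    ⟨C, by rintro _ ⟨w, rfl⟩; exact hC w⟩
  have hle : ∀ w : Wt M, |g w| ≤ S := fun w => le_ciSup hBdd w
  have hS0 : 0 ≤ S := le_trans (abs_nonneg _) (hle ⟨(a, b), hab⟩)
  have habs : ∀ (x y : M), |assocMap g (x, y)| ≤ S * dist x y := by
    intro x y
    by_cases hxy : x ≠ y
    · simp only [assocMap, ne_eq, hxy, not_false_iff, dif_pos]
      rw [abs_mul, abs_of_nonneg dist_nonneg, mul_comm]
      exact mul_le_mul_of_nonneg_right (hle ⟨(x, y), hxy⟩) dist_nonneg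
    · push_neg at hxy
      subst hxy
      simp [assocMap]
  have hval : ∀ (x y : M) (hxy : x ≠ y),
      assocMap g (x, y) = dist x y * g ⟨(x, y), hxy⟩ := by
    intro x y hxy; simp [assocMap, hxy]
  -- one-sided estimate in the first coordinate
  have key1 : ∀ x u y : M, assocMap g (x, y) - assocMap g (u, y) ≤ S * dist x u := by
    intro x u y
    by_cases hxu : x = u
    · subst hxu; simp [mul_nonneg hS0 dist_nonneg]
    by_cases hxy : x = y
    · subst hxy
      have : assocMap g (x, x) = 0 := by simp [assocMap]
      rw [this, zero_sub]
      calc -assocMap g (u, x) ≤ |assocMap g (u, x)| := neg_le_abs _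
        _ ≤ S * dist u x := habs u x
        _ = S * dist x u := by rw [dist_comm]
    by_cases huy : u = y
    · subst huy
      have : assocMap g (u, u) = 0 := by simp [assocMap]
      rw [this, sub_zero]
      calc assocMap g (x, u) ≤ |assocMap g (x, u)| := le_abs_self _
        _ ≤ S * dist x u := habs x u
    · have hb' : dist x u * g ⟨(x, u), hxu⟩ ≤ S * dist x u := by
        calc dist x u * g ⟨(x, u), hxu⟩ ≤ dist x u * |g ⟨(x, u), hxu⟩| :=
              mul_le_mul_of_nonneg_left (le_abs_self _) dist_nonneg
          _ ≤ dist x u * S := mul_le_mul_of_nonneg_left (hle _) dist_nonneg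
          _ = S * dist x u := mul_comm _ _
      rw [hval x y hxy, hval u y huy]
      linarith [hG x u y hxu huy hxy]
  -- one-sided estimate in the second coordinate
  have key2 : ∀ x y v : M, assocMap g (x, y) - assocMap g (x, v) ≤ S * dist y v := by
    intro x y v
    by_cases hyv : y = v
    · subst hyv; simp [mul_nonneg hS0 dist_nonneg]
    by_cases hxy : x = y
    · have h0 : assocMap g (x, y) = 0 := by simp [assocMap, hxy]
      rw [h0, zero_sub]
      calc -assocMap g (x, v) ≤ |assocMap g (x, v)| := neg_le_abs _
        _ ≤ S * dist x v := habs x v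
        _ = S * dist y v := by rw [hxy]
    by_cases hxv : x = v
    · have h0 : assocMap g (x, v) = 0 := by simp [assocMap, hxv]
      rw [h0, sub_zero]
      calc assocMap g (x, y) ≤ |assocMap g (x, y)| := le_abs_self _
        _ ≤ S * dist x y := habs x y
        _ = S * dist y v := by rw [hxv, dist_comm]
    · have hb' : dist v y * g ⟨(v, y), Ne.symm hyv⟩ ≤ S * dist y v := by
        calc dist v y * g ⟨(v, y), Ne.symm hyv⟩ ≤ dist v y * |g ⟨(v, y), Ne.symm hyv⟩| :=
              mul_le_mul_of_nonneg_left (le_abs_self _) dist_nonneg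
          _ ≤ dist v y * S := mul_le_mul_of_nonneg_left (hle _) dist_nonneg
          _ = S * dist y v := by rw [mul_comm, dist_comm]
      rw [hval x y hxy, hval x v hxv]
      linarith [hG x v y hxv (Ne.symm hyv) hxy]
  have abs1 : ∀ x u y : M, |assocMap g (x, y) - assocMap g (u, y)| ≤ S * dist x u := by
    intro x u y
    rw [abs_sub_le_iff]
    exact ⟨key1 x u y, by rw [dist_comm]; exact key1 u x y⟩
  have abs2 : ∀ x y v : M, |assocMap g (x, y) - assocMap g (x, v)| ≤ S * dist y v := by
    intro x y v
    rw [abs_sub_le_iff]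
    exact ⟨key2 x y v, by rw [dist_comm]; exact key2 x v y⟩
  have main : ∀ p q : M × M,
      |assocMap g p - assocMap g q| ≤ S * (dist p.1 q.1 + dist p.2 q.2) := by
    rintro ⟨x, y⟩ ⟨u, v⟩
    calc |assocMap g (x, y) - assocMap g (u, v)|
        ≤ |assocMap g (x, y) - assocMap g (u, y)| + |assocMap g (u, y) - assocMap g (u, v)| :=
          abs_sub_le _ _ _
      _ ≤ S * dist x u + S * dist y v := add_le_add (abs1 x u y) (abs2 u y v)
      _ = S * (dist x u + dist y v) := by ring
  refine ⟨main, ?_⟩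
  -- continuity of assocMap via Lipschitz bound
  have hLip : LipschitzWith (Real.toNNReal (2 * S)) (assocMap g) := by
    apply LipschitzWith.of_dist_le_mul
    intro p q
    rw [Real.dist_eq, Real.coe_toNNReal _ (by positivity)]
    refine (main p q).trans ?_
    have h1 : dist p.1 q.1 ≤ dist p q := by rw [Prod.dist_eq]; exact le_max_left _ _
    have h2 : dist p.2 q.2 ≤ dist p q := by rw [Prod.dist_eq]; exact le_max_right _ _
    nlinarith [dist_nonneg (x := p) (y := q)]
  have hcont : Continuous (assocMap g) := hLip.continuous
  have hg : ∀ w : Wt M, g w = assocMap g w.val / dist w.val.1 w.val.2 := by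
    rintro ⟨⟨x, y⟩, hxy⟩
    rw [hval x y hxy]
    field_simp [dist_ne_zero.mpr hxy]
  have : Continuous fun w : Wt M => assocMap g w.val / dist w.val.1 w.val.2 := by
    apply Continuous.div
    · exact hcont.comp continuous_subtype_val
    · exact Continuous.dist (continuous_fst.comp continuous_subtype_val)
        (continuous_snd.comp continuous_subtype_val)
    · exact fun w => dist_ne_zero.mpr w.2
  convert this using 1
  funext w
  exact hg w
end

section
/- Let g : W → ℝ. Then g is bounded and satisfies the G-inequality if and only if there exists a nonempty set A of Lipschitz functions f : M → ℝ with f(0) = 0, with uniformly bounded Lipschitz constants, such that g(x,y) = sup_{f ∈ A} (f(x) − f(y))/d(x,y) for all (x,y) ∈ W. Moreover, in the forward direction A can be chosen so that the supremum is attained at every (x,y) ∈ W. -/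
theorem stmt2 {M : Type*} [MetricSpace M] (basept : M)
    (h3 : ∃ x y z : M, x ≠ y ∧ x ≠ z ∧ y ≠ z) (g : Wt M → ℝ) :
    ((∃ C : ℝ, ∀ p, |g p| ≤ C) ∧ GIneq g ↔
      ∃ A : Set (M → ℝ), A.Nonempty ∧ (∃ C : NNReal, ∀ f ∈ A, LipschitzWith C f) ∧
        (∀ f ∈ A, f basept = 0) ∧
        ∀ (x y : M) (hxy : x ≠ y),
          g ⟨(x, y), hxy⟩ = sSup ((fun f : M → ℝ => (f x - f y) / dist x y) '' A)) ∧
    ((∃ C : ℝ, ∀ p, |g p| ≤ C) → GIneq g →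
      ∃ A : Set (M → ℝ), A.Nonempty ∧ (∃ C : NNReal, ∀ f ∈ A, LipschitzWith C f) ∧
        (∀ f ∈ A, f basept = 0) ∧
        (∀ (x y : M) (hxy : x ≠ y),
          g ⟨(x, y), hxy⟩ = sSup ((fun f : M → ℝ => (f x - f y) / dist x y) '' A)) ∧
        ∀ (x y : M) (hxy : x ≠ y), ∃ f ∈ A, g ⟨(x, y), hxy⟩ = (f x - f y) / dist x y) := by
  classical
  haveI : Nonempty M := ⟨basept⟩
  -- a third point distinct from any two given points
  have third : ∀ x u : M, ∃ z : M, z ≠ x ∧ z ≠ u := by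
    intro x u
    obtain ⟨a, b, c, hab, hac, hbc⟩ := h3
    by_cases h1 : a = x ∨ a = u
    · by_cases h2 : b = x ∨ b = u
      · refine ⟨c, ?_, ?_⟩ <;>
          (rcases h1 with rfl | rfl <;> rcases h2 with rfl | rfl <;>
            first
              | exact Ne.symm hac
              | exact Ne.symm hbc
              | exact absurd rfl hab
              | simp_all)
      · push_neg at h2; exact ⟨b, h2.1, h2.2⟩
    · push_neg at h1; exact ⟨a, h1.1, h1.2⟩
  -- forward construction (with attainment)
  have key : (∃ C : ℝ, ∀ p, |g p| ≤ C) → GIneq g →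
      ∃ A : Set (M → ℝ), A.Nonempty ∧ (∃ C : NNReal, ∀ f ∈ A, LipschitzWith C f) ∧
        (∀ f ∈ A, f basept = 0) ∧
        (∀ (x y : M) (hxy : x ≠ y),
          g ⟨(x, y), hxy⟩ = sSup ((fun f : M → ℝ => (f x - f y) / dist x y) '' A)) ∧
        ∀ (x y : M) (hxy : x ≠ y), ∃ f ∈ A, g ⟨(x, y), hxy⟩ = (f x - f y) / dist x y := by
    rintro ⟨C0, hC0⟩ hg
    set C : ℝ := max C0 0 with hCdef
    have hCnn : 0 ≤ C := le_max_right _ _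
    have hCb : ∀ p, |g p| ≤ C := fun p => (hC0 p).trans (le_max_left _ _)
    set G : M → M → ℝ := fun x y =>
      if h : x = y then 0 else dist x y * g ⟨(x, y), h⟩ with hGdef
    have Gself : ∀ x, G x x = 0 := by intro x; simp [hGdef]
    have Gd : ∀ x y (h : x ≠ y), G x y = dist x y * g ⟨(x, y), h⟩ := by
      intro x y h; simp [hGdef, h]
    have Gbound : ∀ x y, |G x y| ≤ C * dist x y := by
      intro x y
      by_cases h : x = y
      · subst h; simp [Gself]
      · rw [Gd x y h, abs_mul, abs_of_nonneg (dist_nonneg), mul_comm]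
        exact mul_le_mul_of_nonneg_right (hCb _) dist_nonneg
    have Gtri : ∀ x u y, G x y ≤ G x u + G u y := by
      intro x u y
      by_cases hxu : x = u
      · subst hxu; simp [Gself]
      · by_cases huy : u = y
        · subst huy; simp [Gself]
        · by_cases hxy : x = y
          · subst hxy
            obtain ⟨z, hzx, hzu⟩ := third x u
            have h1 := hg x u z hxu (Ne.symm hzu) (Ne.symm hzx)
            have h2 := hg u x z (Ne.symm hxu) (Ne.symm hzx) (Ne.symm hzu)
            rw [Gself, Gd x u hxu, Gd u x (Ne.symm hxu)]
            linarith
          · rw [Gd x y hxy, Gd x u hxu, Gd u y huy]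
            exact hg x u y hxu huy hxy
    set F : M → (M → ℝ) := fun b x => G x b - G basept b with hFdef
    have hFdiff : ∀ b x y, F b x - F b y = G x b - G y b := by
      intro b x y; simp only [hFdef]; ring
    have hFle : ∀ b x y, F b x - F b y ≤ G x y := by
      intro b x y; rw [hFdiff b x y]; have := Gtri x y b; linarith
    have hLip : ∀ b, LipschitzWith C.toNNReal (F b) := by
      intro b
      apply LipschitzWith.of_dist_le_mul
      intro x y
      rw [Real.dist_eq, Real.coe_toNNReal _ hCnn, abs_sub_le_iff]
      constructor
      · exact (hFle b x y).trans ((le_abs_self _).trans (Gbound x y))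
      · refine (hFle b y x).trans ((le_abs_self _).trans ?_)
        exact le_of_le_of_eq (Gbound y x) (by rw [dist_comm])
    have hgr : ∀ (x y : M) (hxy : x ≠ y),
        IsGreatest ((fun f : M → ℝ => (f x - f y) / dist x y) '' Set.range F)
          (g ⟨(x, y), hxy⟩) := by
      intro x y hxy
      have hd : 0 < dist x y := dist_pos.mpr hxy
      constructor
      · refine ⟨F y, ⟨y, rfl⟩, ?_⟩
        show (F y x - F y y) / dist x y = _
        rw [hFdiff y x y, Gself, sub_zero, Gd x y hxy]
        exact mul_div_cancel_left₀ _ hd.ne'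
      · rintro r ⟨f, ⟨b, rfl⟩, rfl⟩
        show (F b x - F b y) / dist x y ≤ _
        have h := hFle b x y
        rw [Gd x y hxy] at h
        exact ((div_le_div_iff_of_pos_right hd).mpr h).trans_eq (mul_div_cancel_left₀ _ hd.ne')
    refine ⟨Set.range F, Set.range_nonempty _, ⟨C.toNNReal, ?_⟩, ?_, ?_, ?_⟩
    · rintro f ⟨b, rfl⟩; exact hLip b
    · rintro f ⟨b, rfl⟩; simp [hFdef]
    · intro x y hxy; exact ((hgr x y hxy).csSup_eq).symm
    · intro x y hxy
      obtain ⟨f, hf, hfe⟩ := (hgr x y hxy).1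
      exact ⟨f, hf, hfe.symm⟩
  -- reverse direction
  have rev : (∃ A : Set (M → ℝ), A.Nonempty ∧ (∃ C : NNReal, ∀ f ∈ A, LipschitzWith C f) ∧
        (∀ f ∈ A, f basept = 0) ∧
        ∀ (x y : M) (hxy : x ≠ y),
          g ⟨(x, y), hxy⟩ = sSup ((fun f : M → ℝ => (f x - f y) / dist x y) '' A)) →
      (∃ C : ℝ, ∀ p, |g p| ≤ C) ∧ GIneq g := by
    rintro ⟨A, ⟨f0, hf0⟩, ⟨C, hC⟩, hzero, hsup⟩
    have habs : ∀ (x y : M), ∀ f ∈ A, |f x - f y| ≤ (C : ℝ) * dist x y := by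
      intro x y f hf
      have := (hC f hf).dist_le_mul x y
      rwa [Real.dist_eq] at this
    have hub : ∀ (x y : M) (hxy : x ≠ y),
        ∀ r ∈ (fun f : M → ℝ => (f x - f y) / dist x y) '' A, r ≤ (C : ℝ) := by
      rintro x y hxy r ⟨f, hf, rfl⟩
      have hd : 0 < dist x y := dist_pos.mpr hxy
      rw [div_le_iff₀ hd]
      exact (le_abs_self _).trans (habs x y f hf)
    have hne : ∀ (x y : M),
        ((fun f : M → ℝ => (f x - f y) / dist x y) '' A).Nonempty :=
      fun x y => ⟨_, ⟨f0, hf0, rfl⟩⟩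
    have hbdd : ∀ (x y : M) (hxy : x ≠ y),
        BddAbove ((fun f : M → ℝ => (f x - f y) / dist x y) '' A) :=
      fun x y hxy => ⟨(C : ℝ), hub x y hxy⟩
    constructor
    · refine ⟨(C : ℝ), ?_⟩
      rintro ⟨⟨x, y⟩, hxy⟩
      have hd : 0 < dist x y := dist_pos.mpr hxy
      rw [hsup x y hxy, abs_le]
      constructor
      · refine le_trans ?_ (le_csSup (hbdd x y hxy) ⟨f0, hf0, rfl⟩)
        rw [le_div_iff₀ hd]
        have := habs x y f0 hf0
        have := neg_abs_le (f0 x - f0 y)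
        nlinarith
      · exact csSup_le (hne x y) (hub x y hxy)
    · intro x u y hxu huy hxy
      have hdxy : 0 < dist x y := dist_pos.mpr hxy
      have hdxu : 0 < dist x u := dist_pos.mpr hxu
      have hduy : 0 < dist u y := dist_pos.mpr huy
      set R : ℝ := dist x u * g ⟨(x, u), hxu⟩ + dist u y * g ⟨(u, y), huy⟩ with hR
      have hfR : ∀ f ∈ A, f x - f y ≤ R := by
        intro f hf
        have h1 : (f x - f u) / dist x u ≤ g ⟨(x, u), hxu⟩ := by
          rw [hsup x u hxu]; exact le_csSup (hbdd x u hxu) ⟨f, hf, rfl⟩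
        have h2 : (f u - f y) / dist u y ≤ g ⟨(u, y), huy⟩ := by
          rw [hsup u y huy]; exact le_csSup (hbdd u y huy) ⟨f, hf, rfl⟩
        rw [div_le_iff₀ hdxu, mul_comm] at h1
        rw [div_le_iff₀ hduy, mul_comm] at h2
        rw [hR]; linarith
      have hS : sSup ((fun f : M → ℝ => (f x - f y) / dist x y) '' A) ≤ R / dist x y := by
        refine csSup_le (hne x y) ?_
        rintro r ⟨f, hf, rfl⟩
        exact (div_le_div_iff_of_pos_right hdxy).mpr (hfR f hf)
      calc dist x y * g ⟨(x, y), hxy⟩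
          = dist x y * sSup ((fun f : M → ℝ => (f x - f y) / dist x y) '' A) := by
            rw [hsup x y hxy]
        _ ≤ dist x y * (R / dist x y) := by
            exact mul_le_mul_of_nonneg_left hS dist_nonneg
        _ = R := by field_simp
  exact ⟨⟨fun h => by
      obtain ⟨A, h1, h2, h3', h4, _⟩ := key h.1 h.2
      exact ⟨A, h1, h2, h3', h4⟩, rev⟩, key⟩
end

section
/- Suppose g : W → ℝ is bounded and both g and −g satisfy the G-inequality. Then there exists a Lipschitz function f : M → ℝ with f(0) = 0 such that g(x,y) = (f(x) − f(y))/d(x,y) for all (x,y) ∈ W. Conversely, for every Lipschitz f : M → ℝ with f(0) = 0, the function (x,y) ↦ (f(x) − f(y))/d(x,y) is bounded and both it and its negative satisfy the G-inequality. -/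
theorem stmt3 {M : Type*} [MetricSpace M] (basept : M)
    (h3 : ∃ x y z : M, x ≠ y ∧ x ≠ z ∧ y ≠ z) :
    (∀ g : Wt M → ℝ, (∃ C : ℝ, ∀ p, |g p| ≤ C) → GIneq g → GIneq (fun p => -g p) →
      ∃ f : M → ℝ, (∃ C : NNReal, LipschitzWith C f) ∧ f basept = 0 ∧
        ∀ p : Wt M, g p = (f p.1.1 - f p.1.2) / dist p.1.1 p.1.2) ∧
    (∀ f : M → ℝ, (∃ C : NNReal, LipschitzWith C f) → f basept = 0 →
      (∃ C : ℝ, ∀ p : Wt M, |(f p.1.1 - f p.1.2) / dist p.1.1 p.1.2| ≤ C) ∧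
      GIneq (fun p : Wt M => (f p.1.1 - f p.1.2) / dist p.1.1 p.1.2) ∧
      GIneq (fun p : Wt M => -((f p.1.1 - f p.1.2) / dist p.1.1 p.1.2))) := by
  classical
  have third : ∀ x z : M, ∃ y : M, y ≠ x ∧ y ≠ z := by
    obtain ⟨a, b, c, hab, hac, hbc⟩ := h3
    intro x z
    rcases eq_or_ne a x with rfl | hax
    · rcases eq_or_ne b z with rfl | hbz
      · exact ⟨c, Ne.symm hac, Ne.symm hbc⟩
      · exact ⟨b, Ne.symm hab, hbz⟩
    · rcases eq_or_ne a z with rfl | haz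
      · rcases eq_or_ne b x with rfl | hbx
        · exact ⟨c, Ne.symm hbc, Ne.symm hac⟩
        · exact ⟨b, hbx, Ne.symm hab⟩
      · exact ⟨a, hax, haz⟩
  constructor
  · rintro g ⟨C, hC⟩ hg hg'
    set h : M → M → ℝ := fun x y =>
      if hxy : x = y then 0 else dist x y * g ⟨(x, y), hxy⟩ with hh
    have hval : ∀ (x y : M) (hxy : x ≠ y), h x y = dist x y * g ⟨(x, y), hxy⟩ := by
      intro x y hxy; simp [hh, hxy]
    have hcoc : ∀ x u y : M, x ≠ u → u ≠ y → x ≠ y → h x y = h x u + h u y := by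
      intro x u y hxu huy hxy
      have h1 := hg x u y hxu huy hxy
      have h2 := hg' x u y hxu huy hxy
      simp only [mul_neg] at h2
      rw [hval x y hxy, hval x u hxu, hval u y huy]
      linarith
    have hanti : ∀ x z : M, x ≠ z → h x z + h z x = 0 := by
      intro x z hxz
      obtain ⟨y, hyx, hyz⟩ := third x z
      have e1 := hcoc x z y hxz hyz.symm hyx.symm
      have e2 := hcoc z x y hxz.symm hyx.symm hyz.symm
      linarith
    set f : M → ℝ := fun x => if x = basept then 0 else h x basept with hf
    have key : ∀ x y : M, x ≠ y → f x - f y = h x y := by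
      intro x y hxy
      rcases eq_or_ne x basept with hx | hxb
      · rw [hx]
        have hyb : y ≠ basept := fun h => hxy (hx.trans h.symm)
        have e1 : f basept = 0 := by simp [hf]
        have e2 : f y = h y basept := by simp [hf, hyb]
        rw [e1, e2]
        have := hanti basept y (Ne.symm hyb)
        linarith
      · rcases eq_or_ne y basept with rfl | hyb
        · simp [hf, hxb]
        · have h1 : f x = h x basept := by simp [hf, hxb]
          have h2 : f y = h y basept := by simp [hf, hyb]
          have e1 := hcoc x y basept hxy hyb hxb
          rw [h1, h2]
          have := hanti y basept hyb
          linarith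
    refine ⟨f, ⟨C.toNNReal, ?_⟩, by simp [hf], ?_⟩
    · apply LipschitzWith.of_dist_le_mul
      intro x y
      rcases eq_or_ne x y with rfl | hxy
      · simp
      · have hC0 : (0:ℝ) ≤ C := le_trans (abs_nonneg _) (hC ⟨(x, y), hxy⟩)
        rw [Real.dist_eq, key x y hxy, hval x y hxy, abs_mul, abs_of_nonneg dist_nonneg]
        have : |g ⟨(x, y), hxy⟩| ≤ C := hC _
        calc dist x y * |g ⟨(x, y), hxy⟩| ≤ dist x y * C := by
              exact mul_le_mul_of_nonneg_left this dist_nonneg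
          _ = (C.toNNReal : ℝ) * dist x y := by
              rw [Real.coe_toNNReal C hC0]; ring
    · rintro ⟨⟨x, y⟩, hxy⟩
      have hd : dist x y ≠ 0 := fun h => hxy (by simpa using dist_eq_zero.mp h)
      rw [key x y hxy, hval x y hxy]
      field_simp
  · rintro f ⟨C, hf⟩ hf0
    have hbnd : ∀ p : Wt M, |(f p.1.1 - f p.1.2) / dist p.1.1 p.1.2| ≤ (C : ℝ) := by
      rintro ⟨⟨x, y⟩, hxy⟩
      have hd : (0:ℝ) < dist x y := dist_pos.mpr hxy
      rw [abs_div, abs_of_pos hd, div_le_iff₀ hd]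
      have := hf.dist_le_mul x y
      rw [Real.dist_eq] at this
      exact this
    have hcan : ∀ (x y : M), x ≠ y →
        dist x y * ((f x - f y) / dist x y) = f x - f y := by
      intro x y hxy
      have hd : dist x y ≠ 0 := fun h => hxy (by simpa using dist_eq_zero.mp h)
      field_simp
    refine ⟨⟨C, hbnd⟩, ?_, ?_⟩
    · intro x u y hxu huy hxy
      simp only [hcan x y hxy, hcan x u hxu, hcan u y huy]
      linarith
    · intro x u y hxu huy hxy
      simp only [mul_neg, hcan x y hxy, hcan x u hxu, hcan u y huy]
      linarith
end

section
/- Let g : W → ℝ be bounded, nonnegative and satisfy the G-inequality, and let b ≥ 0. Then the function g'(x,y) := min{g(x,y), b/d(x,y)} is bounded, nonnegative and satisfies the G-inequality. -/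
theorem stmt4 {M : Type*} [MetricSpace M]
    (h3 : ∃ x y z : M, x ≠ y ∧ x ≠ z ∧ y ≠ z)
    (g : Wt M → ℝ) (hb : ∃ C : ℝ, ∀ p, |g p| ≤ C) (hpos : ∀ p, 0 ≤ g p) (hG : GIneq g)
    (b : ℝ) (hb0 : 0 ≤ b) :
    (∃ C : ℝ, ∀ p : Wt M, |min (g p) (b / dist p.1.1 p.1.2)| ≤ C) ∧
    (∀ p : Wt M, 0 ≤ min (g p) (b / dist p.1.1 p.1.2)) ∧
    GIneq (fun p : Wt M => min (g p) (b / dist p.1.1 p.1.2)) := by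

  obtain ⟨C, hC⟩ := hb
  have hnn : ∀ p : Wt M, 0 ≤ min (g p) (b / dist p.1.1 p.1.2) := by
    intro p
    exact le_min (hpos p) (div_nonneg hb0 dist_nonneg)
  refine ⟨⟨C, fun p => ?_⟩, hnn, ?_⟩
  · rw [abs_of_nonneg (hnn p)]
    exact le_trans (min_le_left _ _) (le_trans (le_abs_self _) (hC p))
  · intro x u y hxu huy hxy
    have dxy : (0:ℝ) < dist x y := dist_pos.mpr hxy
    have dxu : (0:ℝ) < dist x u := dist_pos.mpr hxu
    have duy : (0:ℝ) < dist u y := dist_pos.mpr huy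
    have key : ∀ (d : ℝ) (hd : 0 < d) (v : ℝ),
        d * min v (b / d) = min (d * v) b := by
      intro d hd v
      rw [mul_min_of_nonneg _ _ hd.le, mul_div_cancel₀ _ hd.ne']
    simp only [key _ dxy, key _ dxu, key _ duy]
    have hA := hG x u y hxu huy hxy
    rcases le_or_gt b (dist x u * g ⟨(x, u), hxu⟩) with h1 | h1
    · calc min (dist x y * g ⟨(x, y), hxy⟩) b ≤ b := min_le_right _ _
        _ ≤ min (dist x u * g ⟨(x, u), hxu⟩) b + min (dist u y * g ⟨(u, y), huy⟩) b := by
            have : min (dist x u * g ⟨(x, u), hxu⟩) b = b := min_eq_right h1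
            rw [this]
            have : (0:ℝ) ≤ min (dist u y * g ⟨(u, y), huy⟩) b :=
              le_min (mul_nonneg duy.le (hpos _)) hb0
            linarith
    rcases le_or_gt b (dist u y * g ⟨(u, y), huy⟩) with h2 | h2
    · calc min (dist x y * g ⟨(x, y), hxy⟩) b ≤ b := min_le_right _ _
        _ ≤ _ := by
            rw [min_eq_right h2]
            have : (0:ℝ) ≤ min (dist x u * g ⟨(x, u), hxu⟩) b :=
              le_min (mul_nonneg dxu.le (hpos _)) hb0
            linarith
    · rw [min_eq_left h1.le, min_eq_left h2.le]
      exact le_trans (min_le_left _ _) hA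
end

section
/- Let f : M → [0,∞) be a Lipschitz function and let a ≥ Lip(f), where Lip(f) is a Lipschitz constant of f. Then the function g : W → ℝ defined by g(x,y) = min{a, f(x)/d(x,y)} takes values in [0,a] and satisfies the G-inequality. The same holds with f(x) replaced by f(y). -/
lemma min_key {a d1 d2 d3 fx fu : ℝ} (ha : 0 ≤ a) (hfu : 0 ≤ fu)
    (h2 : 0 ≤ d2) (h3 : 0 ≤ d3) (htri : d1 ≤ d2 + d3) (hl : fx - fu ≤ a * d2) :
    min (a * d1) fx ≤ min (a * d2) fx + min (a * d3) fu := by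
  rcases le_total fx (a * d2) with h | h
  · rw [min_eq_right h]
    have : (0:ℝ) ≤ min (a * d3) fu := le_min (mul_nonneg ha h3) hfu
    nlinarith [min_le_right (a * d1) fx]
  · rw [min_eq_left h]
    rcases le_total fu (a * d3) with h' | h'
    · rw [min_eq_right h']
      nlinarith [min_le_right (a * d1) fx]
    · rw [min_eq_left h']
      have := mul_le_mul_of_nonneg_left htri ha
      nlinarith [min_le_left (a * d1) fx]

lemma dmul (d fx a : ℝ) (hd : 0 < d) : d * min a (fx / d) = min (a * d) fx := by
  have h : d * (fx / d) = fx := by field_simp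
  rw [mul_min_of_nonneg _ _ hd.le, h, mul_comm d a]

theorem stmt5 {M : Type*} [MetricSpace M]
    (h3 : ∃ x y z : M, x ≠ y ∧ x ≠ z ∧ y ≠ z)
    (f : M → ℝ) (hf0 : ∀ x, 0 ≤ f x)
    (a : ℝ) (hlip : ∀ x y : M, |f x - f y| ≤ a * dist x y) :
    ((∀ p : Wt M, 0 ≤ min a (f p.1.1 / dist p.1.1 p.1.2) ∧
        min a (f p.1.1 / dist p.1.1 p.1.2) ≤ a) ∧
      GIneq (fun p : Wt M => min a (f p.1.1 / dist p.1.1 p.1.2))) ∧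
    ((∀ p : Wt M, 0 ≤ min a (f p.1.2 / dist p.1.1 p.1.2) ∧
        min a (f p.1.2 / dist p.1.1 p.1.2) ≤ a) ∧
      GIneq (fun p : Wt M => min a (f p.1.2 / dist p.1.1 p.1.2))) := by
  have ha : 0 ≤ a := by
    obtain ⟨x, y, z, hxy, _, _⟩ := h3
    have hd : 0 < dist x y := dist_pos.mpr hxy
    have h := (abs_nonneg (f x - f y)).trans (hlip x y)
    exact le_of_mul_le_mul_right (by linarith) hd
  have hbd : ∀ (x y z : M), x ≠ y → 0 ≤ min a (f z / dist x y) ∧ min a (f z / dist x y) ≤ a := by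
    intro x y z hxy
    have hd : 0 < dist x y := dist_pos.mpr hxy
    exact ⟨le_min ha (div_nonneg (hf0 z) hd.le), min_le_left _ _⟩
  refine ⟨⟨fun p => hbd _ _ _ p.2, ?_⟩, ⟨fun p => hbd _ _ _ p.2, ?_⟩⟩
  · intro x u y hxu huy hxy
    simp only
    rw [dmul _ _ _ (dist_pos.mpr hxy), dmul _ _ _ (dist_pos.mpr hxu),
      dmul _ _ _ (dist_pos.mpr huy)]
    have hl : f x - f u ≤ a * dist x u := (le_abs_self _).trans (hlip x u)
    exact min_key ha (hf0 u) dist_nonneg dist_nonneg (dist_triangle x u y) hl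
  · intro x u y hxu huy hxy
    simp only
    rw [dmul _ _ _ (dist_pos.mpr hxy), dmul _ _ _ (dist_pos.mpr hxu),
      dmul _ _ _ (dist_pos.mpr huy)]
    have hl : f y - f u ≤ a * dist u y := by
      have := (le_abs_self _).trans (hlip y u)
      rwa [dist_comm u y]
    have htri : dist x y ≤ dist u y + dist x u := by
      have := dist_triangle x u y; linarith
    have := min_key ha (hf0 u) dist_nonneg dist_nonneg htri hl
    linarith
end

section
/- Let g : W → ℝ be bounded and satisfy the G-inequality, and let A ⊆ M be a set with 0 ∈ A such that g(x,y) ≥ 0 whenever x, y ∈ A are distinct. Then there exists a Lipschitz function f : M → ℝ that vanishes on A (in particular f(0) = 0) and satisfies (f(x) − f(y))/d(x,y) ≤ g(x,y) for all (x,y) ∈ W. -/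
section InfOver

variable {X : Type*} {h : X → X → ℝ} {A : Set X}

theorem bddBelow_range_of_triangle (htri : ∀ x u y, h x y ≤ h x u + h u y)
    (hA : ∀ a ∈ A, ∀ b ∈ A, 0 ≤ h a b) {a₀ : X} (ha₀ : a₀ ∈ A) (x : X) :
    BddBelow (Set.range fun a : A => h x a) := by
  refine ⟨-h a₀ x, ?_⟩
  rintro _ ⟨a, rfl⟩
  linarith [htri a₀ x a, hA a₀ ha₀ a a.2]

theorem iInf_sub_iInf_le_of_triangle (htri : ∀ x u y, h x y ≤ h x u + h u y)
    (hA : ∀ a ∈ A, ∀ b ∈ A, 0 ≤ h a b) {a₀ : X} (ha₀ : a₀ ∈ A) (x y : X) :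
    (⨅ a : A, h x a) - ⨅ a : A, h y a ≤ h x y := by
  have : Nonempty A := ⟨⟨a₀, ha₀⟩⟩
  suffices (⨅ a : A, h x a) - h x y ≤ ⨅ a : A, h y a by linarith
  refine le_ciInf fun b => ?_
  linarith [ciInf_le (bddBelow_range_of_triangle htri hA ha₀ x) b, htri x y b]

theorem iInf_eq_zero_of_mem (hself : ∀ x, h x x = 0) (hA : ∀ a ∈ A, ∀ b ∈ A, 0 ≤ h a b)
    {x : X} (hx : x ∈ A) : ⨅ a : A, h x a = 0 := by
  have : Nonempty A := ⟨⟨x, hx⟩⟩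
  have hbdd : BddBelow (Set.range fun a : A => h x a) := by
    refine ⟨0, ?_⟩
    rintro _ ⟨b, rfl⟩
    exact hA x hx b b.2
  refine le_antisymm ?_ (le_ciInf fun b => hA x hx b b.2)
  calc ⨅ a : A, h x a ≤ h x x := ciInf_le hbdd ⟨x, hx⟩
    _ = 0 := hself x

end InfOver

theorem exists_ne_ne_of_three {M : Type*} (h3 : ∃ x y z : M, x ≠ y ∧ x ≠ z ∧ y ≠ z) (x y : M) :
    ∃ z, z ≠ x ∧ z ≠ y := by
  obtain ⟨a, b, c, hab, hac, hbc⟩ := h3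
  by_contra! hz
  rcases eq_or_ne a x with rfl | hax
  · exact hbc ((hz b hab.symm).trans (hz c hac.symm).symm)
  rcases eq_or_ne b x with rfl | hbx
  · exact hac ((hz a hab).trans (hz c hbc.symm).symm)
  exact hab ((hz a hax).trans (hz b hbx).symm)

section WeightedDist

variable {M : Type*} [MetricSpace M] {g : Wt M → ℝ}

open Classical in
noncomputable def weightedDist (g : Wt M → ℝ) (x y : M) : ℝ :=
  if hxy : x = y then 0 else dist x y * g ⟨(x, y), hxy⟩

@[simp]
theorem weightedDist_self (x : M) : weightedDist g x x = 0 := by simp [weightedDist]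

theorem weightedDist_of_ne {x y : M} (hxy : x ≠ y) :
    weightedDist g x y = dist x y * g ⟨(x, y), hxy⟩ := by simp [weightedDist, hxy]

theorem abs_weightedDist_le {C : ℝ} (hC : ∀ p, |g p| ≤ C) (x y : M) :
    |weightedDist g x y| ≤ C * dist x y := by
  rcases eq_or_ne x y with rfl | hxy
  · simp
  rw [weightedDist_of_ne hxy, abs_mul, abs_of_nonneg dist_nonneg, mul_comm]
  exact mul_le_mul_of_nonneg_right (hC _) dist_nonneg

theorem GIneq.weightedDist_le_of_ne (hG : GIneq g) {x u y : M} (hxu : x ≠ u) (huy : u ≠ y)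
    (hxy : x ≠ y) : weightedDist g x y ≤ weightedDist g x u + weightedDist g u y := by
  rw [weightedDist_of_ne hxu, weightedDist_of_ne huy, weightedDist_of_ne hxy]
  exact hG x u y hxu huy hxy

theorem GIneq.weightedDist_add_weightedDist_nonneg (hG : GIneq g) {x y z : M} (hxy : x ≠ y)
    (hzx : z ≠ x) (hzy : z ≠ y) : 0 ≤ weightedDist g x y + weightedDist g y x := by
  linarith [hG.weightedDist_le_of_ne hxy hzy.symm hzx.symm,
    hG.weightedDist_le_of_ne hzy hxy.symm hzx, hG.weightedDist_le_of_ne hzx hxy hzy,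
    hG.weightedDist_le_of_ne hxy.symm hzx.symm hzy.symm]

theorem GIneq.weightedDist_le (hG : GIneq g) (h3 : ∃ x y z : M, x ≠ y ∧ x ≠ z ∧ y ≠ z)
    (x u y : M) : weightedDist g x y ≤ weightedDist g x u + weightedDist g u y := by
  rcases eq_or_ne x u with rfl | hxu
  · simp
  rcases eq_or_ne u y with rfl | huy
  · simp
  rcases eq_or_ne x y with rfl | hxy
  · obtain ⟨z, hzx, hzu⟩ := exists_ne_ne_of_three h3 x u
    simpa using hG.weightedDist_add_weightedDist_nonneg hxu hzx hzu
  exact hG.weightedDist_le_of_ne hxu huy hxy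

end WeightedDist

theorem stmt6 {M : Type*} [MetricSpace M] (basept : M)
    (h3 : ∃ x y z : M, x ≠ y ∧ x ≠ z ∧ y ≠ z)
    (g : Wt M → ℝ) (hb : ∃ C : ℝ, ∀ p, |g p| ≤ C) (hG : GIneq g)
    (A : Set M) (hA : basept ∈ A)
    (hpos : ∀ (x y : M) (hxy : x ≠ y), x ∈ A → y ∈ A → 0 ≤ g ⟨(x, y), hxy⟩) :
    ∃ f : M → ℝ, (∃ C : NNReal, LipschitzWith C f) ∧ (∀ x ∈ A, f x = 0) ∧ f basept = 0 ∧
      ∀ p : Wt M, (f p.1.1 - f p.1.2) / dist p.1.1 p.1.2 ≤ g p := by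
  obtain ⟨C, hC⟩ := hb
  have htri := hG.weightedDist_le h3
  have hnonneg : ∀ a ∈ A, ∀ b ∈ A, 0 ≤ weightedDist g a b := by
    intro a ha b hb
    rcases eq_or_ne a b with rfl | hab
    · simp
    exact weightedDist_of_ne hab ▸ mul_nonneg dist_nonneg (hpos a b hab ha hb)
  have hsub := iInf_sub_iInf_le_of_triangle htri hnonneg hA
  have hzero : ∀ x ∈ A, ⨅ a : A, weightedDist g x a = 0 :=
    fun x hx => iInf_eq_zero_of_mem weightedDist_self hnonneg hx
  refine ⟨fun x => ⨅ a : A, weightedDist g x a, ⟨_, LipschitzWith.of_le_add_mul' C fun x y => ?_⟩,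
    hzero, hzero basept hA, fun ⟨(x, y), hxy⟩ => ?_⟩
  · linarith [hsub x y, (abs_le.mp (abs_weightedDist_le hC x y)).2]
  · rw [div_le_iff₀ (dist_pos.mpr hxy), mul_comm, ← weightedDist_of_ne hxy]
    exact hsub x y
end

section
/- For every (x,y) ∈ W and every ζ ∈ K, if g(ζ) = g(ι(x,y)) for all g ∈ G, then ζ = ι(x,y). Consequently, the quotient map q restricted to ι(W) is injective, and it is a homeomorphism of ι(W) onto its image in the quotient space K/∼. -/
open MeasureTheory

/-- The cone `G` of continuous functions on `K = βW` satisfying the G-inequality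
on points of `W`. -/
def GSet (M : Type*) [MetricSpace M] : Set (StoneCech (Wt M) → ℝ) :=
  {g | Continuous g ∧ GIneq fun p => g (stoneCechUnit p)}

/-- The Choquet-like quasi-order `μ ≼ ν`. -/
def Preceq {M : Type*} [MetricSpace M] [MeasurableSpace (StoneCech (Wt M))]
    (μ ν : Measure (StoneCech (Wt M))) : Prop :=
  ∀ g ∈ GSet M, ∫ ζ, g ζ ∂μ ≤ ∫ ζ, g ζ ∂ν

/-- `μ` is `≼`-minimal among finite positive Radon Borel measures. -/
def IsMinimal {M : Type*} [MetricSpace M] [MeasurableSpace (StoneCech (Wt M))]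
    (μ : Measure (StoneCech (Wt M))) : Prop :=
  ∀ ν : Measure (StoneCech (Wt M)),
    IsFiniteMeasure ν → ν.InnerRegular → Preceq ν μ → Preceq μ ν

/-- The equivalence relation `ζ ∼ ω` iff `g ζ = g ω` for all `g ∈ G`. -/
def gSetoid (M : Type*) [MetricSpace M] : Setoid (StoneCech (Wt M)) where
  r ζ ω := ∀ g ∈ GSet M, g ζ = g ω
  iseqv := ⟨fun _ _ _ => rfl, fun h g hg => (h g hg).symm,
    fun h1 h2 g hg => (h1 g hg).trans (h2 g hg)⟩

/-- The quotient map `q : K → K/∼`. -/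
def gq (M : Type*) [MetricSpace M] :
    StoneCech (Wt M) → Quotient (gSetoid M) := Quotient.mk _

/-!
For `p = (a, b) ∈ W` and small `δ > 0`, both `g₀ (x, y) = 1 / (1 + d(x, y))` and
`g₀ + c • h` lie in `G`, where `h = min 1 (d(·, p) / δ)` vanishes at `p`, equals `1` off the
`δ`-ball about `p`, and `c > 0` is small. Indeed, the concavity of `r ↦ r / (1 + r)` leaves a
slack of `s t / ((1 + s)(1 + t))` in the triangle inequality for `g₀`, and this slack absorbs the
perturbation because at most one of `(x, u)`, `(u, y)` lies near `p`. Hence a point `ζ` that `G`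
does not separate from `ι p` is a zero of the extension of every such `h`, so every neighbourhood
of `ζ` pulls back under `ι` into every ball about `p`, which forces `ζ = ι p`. The quotient map
is a continuous map from a compact space to a Hausdorff one, hence closed, and its fibres over
`ι(W)` are singletons, so it maps `ι(W)` homeomorphically onto its image.
-/

open Filter Topology Metric Set

theorem DenseRange.eq_of_comap_nhds_le {X Y : Type*} [TopologicalSpace X] [TopologicalSpace Y]
    [T2Space Y] {f : X → Y} (hf : DenseRange f) {x : X} (hfx : ContinuousAt f x) {y : Y}
    (h : comap f (𝓝 y) ≤ 𝓝 x) : y = f x :=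
  haveI : (comap f (𝓝 y)).NeBot := comap_neBot fun _ ht => hf.mem_nhds ht
  tendsto_nhds_unique tendsto_comap (hfx.mono_left h)

theorem exists_stoneCech_extension {X Y : Type*} [TopologicalSpace X] [TopologicalSpace Y]
    [T2Space Y] {f : X → Y} (hf : Continuous f) {s : Set Y} (hs : IsCompact s)
    (hfs : ∀ x, f x ∈ s) :
    ∃ F : StoneCech X → Y, Continuous F ∧ ∀ x, F (stoneCechUnit x) = f x := by
  have := isCompact_iff_compactSpace.1 hs
  exact ⟨Subtype.val ∘ stoneCechExtend (hf.codRestrict hfs),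
    continuous_subtype_val.comp (continuous_stoneCechExtend _),
    fun x => congrArg Subtype.val (congrFun (stoneCechExtend_extends (hf.codRestrict hfs)) x)⟩

theorem IsClosedMap.exists_homeomorph_image {X Y : Type*} [TopologicalSpace X]
    [TopologicalSpace Y] {f : X → Y} (hf : Continuous f) (hf' : IsClosedMap f) {s : Set X}
    (hs : ∀ x ∈ s, ∀ y, f y = f x → y = x) :
    ∃ e : s ≃ₜ f '' s, ∀ x, (e x : Y) = f x := by
  have hsat : s = f ⁻¹' (f '' s) := (subset_preimage_image f s).antisymm
    fun y ⟨x, hx, hxy⟩ => (hs x hx y hxy.symm).symm ▸ hx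
  have hφ : IsHomeomorph ((f '' s).restrictPreimage f) := by
    refine isHomeomorph_iff_continuous_isClosedMap_bijective.2
      ⟨hf.restrictPreimage, hf'.restrictPreimage _, fun ⟨x, hx⟩ ⟨y, _⟩ hxy => ?_, ?_⟩
    · obtain ⟨z, hz, hzx⟩ := hx
      have hyz : f y = f z := (congrArg Subtype.val hxy).symm.trans hzx.symm
      exact Subtype.ext ((hs z hz x hzx.symm).trans (hs z hz y hyz).symm)
    · rintro ⟨_, x, hx, rfl⟩
      exact ⟨⟨x, mem_image_of_mem f hx⟩, rfl⟩
  exact ⟨(Homeomorph.setCongr hsat).trans (hφ.homeomorph _), fun _ => rfl⟩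

theorem div_one_add_le_div_one_add {a b : ℝ} (ha : 0 ≤ a) (hab : a ≤ b) :
    a / (1 + a) ≤ b / (1 + b) := by
  rw [div_le_div_iff₀ (by linarith) (by linarith)]
  nlinarith

theorem div_one_add_add_le {r s t : ℝ} (hr : 0 ≤ r) (hs : 0 ≤ s) (ht : 0 ≤ t)
    (hrst : r ≤ s + t) :
    r / (1 + r) + s * t / ((1 + s) * (1 + t)) ≤ s / (1 + s) + t / (1 + t) := by
  calc r / (1 + r) + s * t / ((1 + s) * (1 + t))
      ≤ (s + t) / (1 + (s + t)) + s * t / ((1 + s) * (1 + t)) := by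
        gcongr ?_ + _; exact div_one_add_le_div_one_add hr hrst
    _ ≤ s / (1 + s) + t / (1 + t) := by
        rw [div_add_div _ _ (by positivity) (by positivity),
          div_add_div _ _ (by positivity) (by positivity),
          div_le_div_iff₀ (by positivity) (by positivity)]
        nlinarith [mul_nonneg hs ht, mul_nonneg (mul_nonneg hs ht) (mul_nonneg hs ht),
          mul_nonneg (mul_nonneg hs ht) (add_nonneg hs ht)]

theorem min_one_mul_le {L s : ℝ} (hs : 0 ≤ s) :
    min 1 (L * s) ≤ (1 + L) * s / (1 + s) := by
  rw [le_div_iff₀ (by linarith)]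
  rcases le_total (L * s) 1 with h | h
  · rw [min_eq_right h]; nlinarith
  · rw [min_eq_left h]; nlinarith

theorem mul_mul_sub_le_of_lipschitz {s t b₁ b₃ L T c : ℝ} (hs : 0 ≤ s) (ht : 0 ≤ t) (hL : 0 ≤ L)
    (hc₀ : 0 ≤ c) (hc : c * ((1 + L) * (1 + T)) ≤ 1) (hb₁ : b₁ ≤ 1) (hb₃ : b₃ ∈ Icc (0 : ℝ) 1)
    (hlip : b₁ - b₃ ≤ L * s) (hT : b₃ < 1 → t ≤ T) :
    c * (t * (b₁ - b₃)) ≤ s * t / ((1 + s) * (1 + t)) := by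
  rcases hb₃.2.lt_or_eq with hb₃1 | rfl
  · have htT := hT hb₃1
    calc c * (t * (b₁ - b₃)) ≤ c * (t * ((1 + L) * s / (1 + s))) := by
          gcongr; exact (le_min (by linarith [hb₃.1]) hlip).trans (min_one_mul_le hs)
      _ = c * ((1 + L) * (1 + t)) * (s * t / ((1 + s) * (1 + t))) := by
          field_simp
      _ ≤ 1 * (s * t / ((1 + s) * (1 + t))) := by
          gcongr
          calc c * ((1 + L) * (1 + t)) ≤ c * ((1 + L) * (1 + T)) := by gcongr
            _ ≤ 1 := hc
      _ = s * t / ((1 + s) * (1 + t)) := one_mul _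
  · have : c * (t * (b₁ - 1)) ≤ 0 :=
      mul_nonpos_of_nonneg_of_nonpos hc₀ (mul_nonpos_of_nonneg_of_nonpos ht (by linarith))
    exact this.trans (by positivity)

theorem perturbed_triangle_ineq {r s t b₁ b₂ b₃ L T c : ℝ} (hr : 0 ≤ r) (hs : 0 ≤ s)
    (ht : 0 ≤ t) (hrst : r ≤ s + t) (hL : 0 ≤ L) (hc₀ : 0 ≤ c)
    (hc : c * ((1 + L) * (1 + T)) ≤ 1) (hb₁ : b₁ ∈ Icc (0 : ℝ) 1) (hb₂ : b₂ ∈ Icc (0 : ℝ) 1)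
    (hb₃ : b₃ ∈ Icc (0 : ℝ) 1) (hlip₂ : b₁ - b₂ ≤ L * t) (hlip₃ : b₁ - b₃ ≤ L * s)
    (hT₂ : b₂ < 1 → s ≤ T) (hT₃ : b₃ < 1 → t ≤ T) (hfar : b₂ = 1 ∨ b₃ = 1) :
    r * (1 / (1 + r) + c * b₁) ≤ s * (1 / (1 + s) + c * b₂) + t * (1 / (1 + t) + c * b₃) := by
  have hslack := div_one_add_add_le hr hs ht hrst
  have hexcess : c * (r * b₁) ≤ c * (s * b₂) + c * (t * b₃) + s * t / ((1 + s) * (1 + t)) := by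
    rcases hfar with rfl | rfl
    · have := mul_mul_sub_le_of_lipschitz hs ht hL hc₀ hc hb₁.2 hb₃ hlip₃ hT₃
      have : r * b₁ ≤ s + t * b₁ := by nlinarith [hb₁.1, hb₁.2]
      nlinarith
    · have := mul_mul_sub_le_of_lipschitz ht hs hL hc₀ hc hb₁.2 hb₂ hlip₂ hT₂
      have : r * b₁ ≤ s * b₁ + t := by nlinarith [hb₁.1, hb₁.2]
      rw [mul_comm s t, mul_comm (1 + s)]
      nlinarith
  have expand : ∀ z h : ℝ, z * (1 / (1 + z) + c * h) = z / (1 + z) + c * (z * h) :=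
    fun z h => by ring
  rw [expand, expand, expand]
  linarith

namespace Wt

variable {M : Type*} [MetricSpace M]

theorem dist_eq (w w' : Wt M) : dist w w' = max (dist w.1.1 w'.1.1) (dist w.1.2 w'.1.2) := rfl

theorem mem_ball {w p : Wt M} {δ : ℝ} :
    w ∈ ball p δ ↔ dist w.1.1 p.1.1 < δ ∧ dist w.1.2 p.1.2 < δ := by
  rw [Metric.mem_ball, dist_eq, max_lt_iff]

theorem dist_le_of_mem_ball {w p : Wt M} {δ : ℝ} (hw : w ∈ ball p δ)
    (hδ : δ ≤ dist p.1.1 p.1.2 / 2) : dist w.1.1 w.1.2 ≤ 2 * dist p.1.1 p.1.2 := by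
  obtain ⟨h₁, h₂⟩ := mem_ball.1 hw
  linarith [dist_triangle4 w.1.1 p.1.1 p.1.2 w.1.2, dist_comm w.1.2 p.1.2]

theorem mk_notMem_ball_of_mk_mem_ball {x u y : M} (hxu : x ≠ u) (huy : u ≠ y) {p : Wt M} {δ : ℝ}
    (hδ : δ ≤ dist p.1.1 p.1.2 / 2) (h : (⟨(x, u), hxu⟩ : Wt M) ∈ ball p δ) :
    (⟨(u, y), huy⟩ : Wt M) ∉ ball p δ := fun h' => by
  have h₁ := (mem_ball.1 h).2
  have h₂ := (mem_ball.1 h').1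
  linarith [dist_triangle_left p.1.1 p.1.2 u]

noncomputable def bump (p : Wt M) (δ : ℝ) (w : Wt M) : ℝ := min 1 (dist w p / δ)

theorem bump_mem_Icc (p : Wt M) {δ : ℝ} (hδ : 0 ≤ δ) (w : Wt M) : bump p δ w ∈ Icc (0 : ℝ) 1 :=
  ⟨le_min zero_le_one (by positivity), min_le_left _ _⟩

theorem bump_self (p : Wt M) (δ : ℝ) : bump p δ p = 0 := by simp [bump]

theorem mem_ball_of_bump_lt_one {p w : Wt M} {δ : ℝ} (hδ : 0 < δ) (h : bump p δ w < 1) :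
    w ∈ ball p δ := by
  rw [bump, min_lt_iff, lt_self_iff_false, false_or, div_lt_one hδ] at h
  exact h

theorem bump_eq_one_of_notMem_ball {p w : Wt M} {δ : ℝ} (hδ : 0 < δ) (h : w ∉ ball p δ) :
    bump p δ w = 1 :=
  ((bump_mem_Icc p hδ.le w).2.lt_or_eq.resolve_left fun h' => h (mem_ball_of_bump_lt_one hδ h'))

theorem bump_sub_bump_le (p : Wt M) {δ : ℝ} (hδ : 0 < δ) (w w' : Wt M) :
    bump p δ w - bump p δ w' ≤ δ⁻¹ * dist w w' := by
  have h : dist w p / δ ≤ dist w' p / δ + δ⁻¹ * dist w w' := by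
    rw [inv_mul_eq_div, ← add_div]
    gcongr
    linarith [dist_triangle w w' p]
  have : 0 ≤ δ⁻¹ * dist w w' := by positivity
  unfold bump
  rcases min_cases 1 (dist w' p / δ) with ⟨h', -⟩ | ⟨h', -⟩ <;> rw [h'] <;>
    linarith [min_le_left 1 (dist w p / δ), min_le_right 1 (dist w p / δ)]

theorem continuous_bump (p : Wt M) (δ : ℝ) : Continuous (bump p δ) := by
  unfold bump; fun_prop

end Wt

section

open Wt

variable {M : Type*} [MetricSpace M]

theorem gIneq_one_div_one_add_dist_add_bump {p : Wt M} {δ c : ℝ} (hδ₀ : 0 < δ)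
    (hδ : δ ≤ dist p.1.1 p.1.2 / 2) (hc₀ : 0 ≤ c)
    (hc : c * ((1 + δ⁻¹) * (1 + 2 * dist p.1.1 p.1.2)) ≤ 1) :
    GIneq fun w : Wt M => 1 / (1 + dist w.1.1 w.1.2) + c * bump p δ w := by
  intro x u y hxu huy hxy
  have hfar : bump p δ ⟨(x, u), hxu⟩ = 1 ∨ bump p δ ⟨(u, y), huy⟩ = 1 := by
    by_cases h : (⟨(x, u), hxu⟩ : Wt M) ∈ ball p δ
    · exact .inr (bump_eq_one_of_notMem_ball hδ₀ (mk_notMem_ball_of_mk_mem_ball hxu huy hδ h))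
    · exact .inl (bump_eq_one_of_notMem_ball hδ₀ h)
  refine perturbed_triangle_ineq dist_nonneg dist_nonneg dist_nonneg (dist_triangle x u y)
    (inv_nonneg.2 hδ₀.le) hc₀ hc (bump_mem_Icc p hδ₀.le _) (bump_mem_Icc p hδ₀.le _)
    (bump_mem_Icc p hδ₀.le _) ?_ ?_
    (fun h => dist_le_of_mem_ball (mem_ball_of_bump_lt_one hδ₀ h) hδ)
    (fun h => dist_le_of_mem_ball (mem_ball_of_bump_lt_one hδ₀ h) hδ) hfar
  · convert bump_sub_bump_le p hδ₀ ⟨(x, y), hxy⟩ ⟨(x, u), hxu⟩ using 2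
    simp [Wt.dist_eq, dist_comm y u]
  · convert bump_sub_bump_le p hδ₀ ⟨(x, y), hxy⟩ ⟨(u, y), huy⟩ using 2
    simp [Wt.dist_eq]

theorem continuous_one_div_one_add_dist :
    Continuous fun w : Wt M => 1 / (1 + dist w.1.1 w.1.2) :=
  continuous_const.div (continuous_const.add (by fun_prop)) fun w => by positivity

theorem bump_extension_eq_zero {p : Wt M} {ζ : StoneCech (Wt M)}
    (hζ : ∀ g ∈ GSet M, g ζ = g (stoneCechUnit p)) {δ : ℝ} (hδ₀ : 0 < δ)
    (hδ : δ ≤ dist p.1.1 p.1.2 / 2) {H : StoneCech (Wt M) → ℝ} (hH : Continuous H)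
    (hHext : ∀ w, H (stoneCechUnit w) = bump p δ w) : H ζ = 0 := by
  obtain ⟨G₀, hG₀, hG₀ext⟩ := exists_stoneCech_extension continuous_one_div_one_add_dist
    isCompact_Icc fun w : Wt M => (⟨by positivity, div_le_one_of_le₀ (by simp) (by positivity)⟩ :
      1 / (1 + dist w.1.1 w.1.2) ∈ Icc (0 : ℝ) 1)
  have hmem : ∀ c : ℝ, 0 ≤ c → c * ((1 + δ⁻¹) * (1 + 2 * dist p.1.1 p.1.2)) ≤ 1 →
      (fun ω => G₀ ω + c * H ω) ∈ GSet M := fun c hc₀ hc =>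
    ⟨hG₀.add (continuous_const.mul hH), by
      simpa only [hG₀ext, hHext] using gIneq_one_div_one_add_dist_add_bump hδ₀ hδ hc₀ hc⟩
  set c := ((1 + δ⁻¹) * (1 + 2 * dist p.1.1 p.1.2))⁻¹
  have hc : 0 < c := by positivity
  -- `c = 0` and `c > 0` both give members of `G`; their difference isolates `H`.
  have e₀ := hζ _ (hmem 0 le_rfl (by simp))
  have e₁ := hζ _ (hmem c hc.le (inv_mul_cancel₀ (by positivity)).le)
  simp only [hG₀ext, hHext, bump_self] at e₀ e₁
  exact (mul_eq_zero.1 (by linarith : c * H ζ = 0)).resolve_left hc.ne'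

theorem comap_nhds_le_of_forall_GSet {p : Wt M} {ζ : StoneCech (Wt M)}
    (hζ : ∀ g ∈ GSet M, g ζ = g (stoneCechUnit p)) : comap stoneCechUnit (𝓝 ζ) ≤ 𝓝 p := by
  refine nhds_basis_ball.ge_iff.2 fun ε hε => ?_
  set δ := min ε (dist p.1.1 p.1.2 / 2)
  have hδ₀ : 0 < δ := lt_min hε (half_pos (dist_pos.2 p.2))
  obtain ⟨H, hH, hHext⟩ :=
    exists_stoneCech_extension (continuous_bump p δ) isCompact_Icc (bump_mem_Icc p hδ₀.le)
  have hHζ : H ζ < 1 := by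
    rw [bump_extension_eq_zero hζ hδ₀ (min_le_right _ _) hH hHext]; exact one_pos
  refine mem_comap.2 ⟨H ⁻¹' Iio 1, hH.continuousAt.preimage_mem_nhds (Iio_mem_nhds hHζ),
    fun w hw => ball_subset_ball (min_le_left _ _) (mem_ball_of_bump_lt_one hδ₀ ?_)⟩
  simpa [hHext] using hw

theorem eq_stoneCechUnit_of_forall_GSet (p : Wt M) (ζ : StoneCech (Wt M))
    (hζ : ∀ g ∈ GSet M, g ζ = g (stoneCechUnit p)) : ζ = stoneCechUnit p :=
  denseRange_stoneCechUnit.eq_of_comap_nhds_le continuous_stoneCechUnit.continuousAt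
    (comap_nhds_le_of_forall_GSet hζ)

instance : T2Space (Quotient (gSetoid M)) where
  t2 := by
    rintro ⟨ζ⟩ ⟨ω⟩ hne
    obtain ⟨g, hg, hgne⟩ : ∃ g ∈ GSet M, g ζ ≠ g ω := by
      by_contra! h
      exact hne (Quotient.sound h)
    exact separated_by_continuous
      (hg.1.quotient_lift fun a b (h : ∀ g ∈ GSet M, g a = g b) => h g hg) hgne

end

theorem stmt7_general {M : Type*} [MetricSpace M] :
    (∀ (p : Wt M) (ζ : StoneCech (Wt M)),
        (∀ g ∈ GSet M, g ζ = g (stoneCechUnit p)) → ζ = stoneCechUnit p) ∧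
    Set.InjOn (gq M) (Set.range (stoneCechUnit : Wt M → StoneCech (Wt M))) ∧
    ∃ e : ↥(Set.range (stoneCechUnit : Wt M → StoneCech (Wt M))) ≃ₜ
        ↥(gq M '' Set.range (stoneCechUnit : Wt M → StoneCech (Wt M))),
      ∀ x, (e x : Quotient (gSetoid M)) = gq M (x : StoneCech (Wt M)) := by
  have hfiber : ∀ x ∈ range (stoneCechUnit : Wt M → StoneCech (Wt M)), ∀ y,
      gq M y = gq M x → y = x := by
    rintro _ ⟨p, rfl⟩ y h
    exact eq_stoneCechUnit_of_forall_GSet p y (Quotient.exact h)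
  have hq : Continuous (gq M) := continuous_quotient_mk'
  exact ⟨eq_stoneCechUnit_of_forall_GSet, fun x _ y hy h => hfiber y hy x h,
    hq.isClosedMap.exists_homeomorph_image hq hfiber⟩

theorem stmt7 {M : Type*} [MetricSpace M]
    (h3 : ∃ x y z : M, x ≠ y ∧ x ≠ z ∧ y ≠ z) :
    (∀ (p : Wt M) (ζ : StoneCech (Wt M)),
        (∀ g ∈ GSet M, g ζ = g (stoneCechUnit p)) → ζ = stoneCechUnit p) ∧
    Set.InjOn (gq M) (Set.range (stoneCechUnit : Wt M → StoneCech (Wt M))) ∧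
    ∃ e : ↥(Set.range (stoneCechUnit : Wt M → StoneCech (Wt M))) ≃ₜ
        ↥(gq M '' Set.range (stoneCechUnit : Wt M → StoneCech (Wt M))),
      ∀ x, (e x : Quotient (gSetoid M)) = gq M (x : StoneCech (Wt M)) :=
  stmt7_general
end

section
/- Let μ and ν be finite positive Radon Borel measures on K. Then μ ≼ ν and ν ≼ μ hold simultaneously if and only if the pushforward measures of μ and ν under the quotient map q coincide, i.e. q♯μ = q♯ν. -/
open MeasureTheory

/-!
`G` is a convex cone containing the nonnegative constants and closed under `max`, so the functions
on `K/∼` induced by `G - G` form a lattice containing every affine image `β g + α` of an element of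
`G`. As `G` separates the points of `K/∼`, the lattice Stone–Weierstrass theorem makes this lattice
dense in `C(K/∼, ℝ)`. If `μ ≼ ν ≼ μ`, the integrals against `q♯μ` and `q♯ν` agree on it, hence on
all of `C(K/∼, ℝ)`, and on the compact Hausdorff space `K/∼` the uniqueness part of the
Riesz–Markov–Kakutani theorem gives `q♯μ = q♯ν`.
-/

open Pointwise

lemma sub_sup_sub_eq {α : Type*} [Lattice α] [AddCommGroup α] [IsOrderedAddMonoid α]
    (a b c d : α) : (a - b) ⊔ (c - d) = (a + d) ⊔ (c + b) - (b + d) := by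
  rw [sup_sub, add_sub_add_right_eq_sub, add_comm b d, add_sub_add_right_eq_sub]

section CompactSpace

variable {X : Type*} [TopologicalSpace X] [CompactSpace X] [MeasurableSpace X] [BorelSpace X]

lemma ContinuousMap.continuous_integral (μ : Measure X) [IsFiniteMeasure μ] :
    Continuous fun f : C(X, ℝ) => ∫ x, f x ∂μ :=
  (MeasureTheory.continuous_integral.comp (toLp 1 μ ℝ).continuous).congr fun f =>
    integral_congr_ae (coeFn_toLp μ f)

lemma MeasureTheory.Measure.ext_of_integral_eq_on_dense [T2Space X]
    {μ ν : Measure X} [IsFiniteMeasure μ] [IsFiniteMeasure ν] [μ.InnerRegular] [ν.InnerRegular]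
    {A : Set C(X, ℝ)} (hA : Dense A) (h : ∀ f ∈ A, ∫ x, f x ∂μ = ∫ x, f x ∂ν) : μ = ν := by
  have hall := (ContinuousMap.continuous_integral μ).ext_on hA
    (ContinuousMap.continuous_integral ν) h
  exact Measure.ext_of_integral_eq_on_compactlySupported fun f => congr_fun hall f

end CompactSpace

section GSet

variable {M : Type*} [MetricSpace M] {g h : StoneCech (Wt M) → ℝ}

lemma GSet.const_mem {c : ℝ} (hc : 0 ≤ c) : (fun _ => c) ∈ GSet M :=
  ⟨continuous_const, fun x u y _ _ _ => by
    simpa only [← add_mul] using mul_le_mul_of_nonneg_right (dist_triangle x u y) hc⟩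

lemma GSet.add_mem (hg : g ∈ GSet M) (hh : h ∈ GSet M) : g + h ∈ GSet M :=
  ⟨hg.1.add hh.1, fun x u y hxu huy hxy => by
    simp only [Pi.add_apply, mul_add]
    linarith [hg.2 x u y hxu huy hxy, hh.2 x u y hxu huy hxy]⟩

lemma GSet.smul_mem {c : ℝ} (hc : 0 ≤ c) (hg : g ∈ GSet M) : c • g ∈ GSet M :=
  ⟨hg.1.const_smul c, fun x u y hxu huy hxy => by
    simp only [Pi.smul_apply, smul_eq_mul]
    linarith [mul_le_mul_of_nonneg_left (hg.2 x u y hxu huy hxy) hc]⟩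

lemma GSet.sup_mem (hg : g ∈ GSet M) (hh : h ∈ GSet M) : g ⊔ h ∈ GSet M := by
  refine ⟨hg.1.sup hh.1, fun x u y hxu huy hxy => ?_⟩
  simp only [Pi.sup_apply, mul_max_of_nonneg _ _ dist_nonneg]
  refine max_le ((hg.2 x u y hxu huy hxy).trans ?_) ((hh.2 x u y hxu huy hxy).trans ?_) <;>
    gcongr <;> simp

lemma GSet.affine_mem_sub (hg : g ∈ GSet M) (β α : ℝ) :
    (fun ζ => β * g ζ + α) ∈ GSet M - GSet M := by
  refine ⟨β⁺ • g + fun _ => α⁺,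
    GSet.add_mem (smul_mem (posPart_nonneg β) hg) (const_mem (posPart_nonneg α)),
    β⁻ • g + fun _ => α⁻,
    GSet.add_mem (smul_mem (negPart_nonneg β) hg) (const_mem (negPart_nonneg α)),
    funext fun ζ => ?_⟩
  simp only [Pi.sub_apply, Pi.add_apply, Pi.smul_apply, smul_eq_mul]
  linear_combination g ζ * posPart_sub_negPart β + posPart_sub_negPart α

end GSet

section Quotient

variable {M : Type*} [MetricSpace M]

lemma continuous_gq : Continuous (gq M) := continuous_quotient_mk'

lemma gq_surjective : Function.Surjective (gq M) := Quotient.mk_surjective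

lemma exists_mem_gSet_ne_of_gq_ne {ζ ω : StoneCech (Wt M)} (h : gq M ζ ≠ gq M ω) :
    ∃ g ∈ GSet M, g ζ ≠ g ω := by
  by_contra! h'
  exact h (Quotient.sound h')

def GSet.lift {g : StoneCech (Wt M) → ℝ} (hg : g ∈ GSet M) : C(Quotient (gSetoid M), ℝ) :=
  ⟨Quotient.lift g fun _ _ h => h g hg, hg.1.quotient_lift _⟩

@[simp] lemma GSet.lift_gq {g : StoneCech (Wt M) → ℝ} (hg : g ∈ GSet M) (ζ : StoneCech (Wt M)) :
    GSet.lift hg (gq M ζ) = g ζ := rfl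

instance inst_s8 : T2Space (Quotient (gSetoid M)) := by
  refine ⟨gq_surjective.forall₂.2 fun ζ ω h => ?_⟩
  obtain ⟨g, hg, hne⟩ := exists_mem_gSet_ne_of_gq_ne h
  exact separated_by_continuous (GSet.lift hg).continuous hne

variable (M) in
def gDiff : Set C(Quotient (gSetoid M), ℝ) := {f | ⇑f ∘ gq M ∈ GSet M - GSet M}

lemma GSet.affine_lift_mem_gDiff {g : StoneCech (Wt M) → ℝ} (hg : g ∈ GSet M) (β α : ℝ) :
    β • GSet.lift hg + ContinuousMap.const _ α ∈ gDiff M :=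
  GSet.affine_mem_sub hg β α

lemma neg_mem_gDiff {f : C(Quotient (gSetoid M), ℝ)} (hf : f ∈ gDiff M) : -f ∈ gDiff M := by
  obtain ⟨g, hg, h, hh, hf⟩ := hf
  exact ⟨h, hh, g, hg, by rw [ContinuousMap.coe_neg, Pi.neg_comp, ← hf, neg_sub]⟩

lemma sup_mem_gDiff {f₁ f₂ : C(Quotient (gSetoid M), ℝ)} (hf₁ : f₁ ∈ gDiff M)
    (hf₂ : f₂ ∈ gDiff M) : f₁ ⊔ f₂ ∈ gDiff M := by
  obtain ⟨g₁, hg₁, h₁, hh₁, hf₁⟩ := hf₁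
  obtain ⟨g₂, hg₂, h₂, hh₂, hf₂⟩ := hf₂
  refine ⟨_, GSet.sup_mem (GSet.add_mem hg₁ hh₂) (GSet.add_mem hg₂ hh₁),
    _, GSet.add_mem hh₁ hh₂, ?_⟩
  beta_reduce at hf₁ hf₂ ⊢
  rw [← sub_sup_sub_eq, hf₁, hf₂]
  rfl

lemma inf_mem_gDiff {f₁ f₂ : C(Quotient (gSetoid M), ℝ)} (hf₁ : f₁ ∈ gDiff M)
    (hf₂ : f₂ ∈ gDiff M) : f₁ ⊓ f₂ ∈ gDiff M := by
  simpa only [neg_sup, neg_neg] using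
    neg_mem_gDiff (sup_mem_gDiff (neg_mem_gDiff hf₁) (neg_mem_gDiff hf₂))

lemma gDiff_separatesPointsStrongly : (gDiff M).SeparatesPointsStrongly := by
  intro v x y
  obtain ⟨ζ, rfl⟩ := gq_surjective x
  obtain ⟨ω, rfl⟩ := gq_surjective y
  by_cases hζω : gq M ζ = gq M ω
  · refine ⟨_, GSet.affine_lift_mem_gDiff (GSet.const_mem le_rfl) 0 (v (gq M ζ)), ?_, ?_⟩ <;>
      simp [← hζω]
  obtain ⟨g, hg, hne⟩ := exists_mem_gSet_ne_of_gq_ne hζω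
  have hne' : g ζ - g ω ≠ 0 := sub_ne_zero_of_ne hne
  set β := (v (gq M ζ) - v (gq M ω)) / (g ζ - g ω)
  refine ⟨_, GSet.affine_lift_mem_gDiff hg β (v (gq M ζ) - β * g ζ), by simp, ?_⟩
  simp only [ContinuousMap.add_apply, ContinuousMap.smul_apply, GSet.lift_gq,
    ContinuousMap.const_apply, smul_eq_mul, β]
  field_simp
  ring

lemma dense_gDiff : Dense (gDiff M) :=
  dense_iff_closure_eq.2 <| ContinuousMap.sublattice_closure_eq_top _
    ⟨_, GSet.affine_lift_mem_gDiff (GSet.const_mem le_rfl) 0 0⟩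
    (fun _ hf _ hg => inf_mem_gDiff hf hg) (fun _ hf _ hg => sup_mem_gDiff hf hg)
    gDiff_separatesPointsStrongly

end Quotient

section Integrals

variable {M : Type*} [MetricSpace M] [MeasurableSpace (StoneCech (Wt M))]

lemma preceq_and_preceq_iff {μ ν : Measure (StoneCech (Wt M))} :
    Preceq μ ν ∧ Preceq ν μ ↔ ∀ g ∈ GSet M, ∫ ζ, g ζ ∂μ = ∫ ζ, g ζ ∂ν :=
  ⟨fun h g hg => le_antisymm (h.1 g hg) (h.2 g hg),
    fun h => ⟨fun g hg => (h g hg).le, fun g hg => (h g hg).ge⟩⟩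

variable [BorelSpace (StoneCech (Wt M))] (μ : Measure (StoneCech (Wt M)))

lemma GSet.integrable [IsFiniteMeasure μ] {g : StoneCech (Wt M) → ℝ} (hg : g ∈ GSet M) :
    Integrable g μ :=
  hg.1.integrable_of_hasCompactSupport (.of_compactSpace g)

variable [MeasurableSpace (Quotient (gSetoid M))] [BorelSpace (Quotient (gSetoid M))]

lemma integral_map_gq (f : C(Quotient (gSetoid M), ℝ)) :
    ∫ t, f t ∂μ.map (gq M) = ∫ ζ, f (gq M ζ) ∂μ :=
  integral_map continuous_gq.measurable.aemeasurable f.continuous.aestronglyMeasurable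

lemma integral_map_gq_of_mem_gDiff [IsFiniteMeasure μ] {f : C(Quotient (gSetoid M), ℝ)}
    {g h : StoneCech (Wt M) → ℝ} (hg : g ∈ GSet M) (hh : h ∈ GSet M) (hf : g - h = ⇑f ∘ gq M) :
    ∫ t, f t ∂μ.map (gq M) = ∫ ζ, g ζ ∂μ - ∫ ζ, h ζ ∂μ := by
  rw [integral_map_gq, ← integral_sub (GSet.integrable μ hg) (GSet.integrable μ hh)]
  exact integral_congr_ae (.of_forall fun ζ => (congr_fun hf ζ).symm)

end Integrals

theorem stmt8_general {M : Type*} [MetricSpace M]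
    [MeasurableSpace (StoneCech (Wt M))] [BorelSpace (StoneCech (Wt M))]
    [MeasurableSpace (Quotient (gSetoid M))] [BorelSpace (Quotient (gSetoid M))]
    (μ ν : Measure (StoneCech (Wt M)))
    [IsFiniteMeasure μ] [IsFiniteMeasure ν] [μ.InnerRegular] [ν.InnerRegular] :
    (Preceq μ ν ∧ Preceq ν μ) ↔ Measure.map (gq M) μ = Measure.map (gq M) ν := by
  rw [preceq_and_preceq_iff]
  refine ⟨fun h => ?_, fun h g hg => ?_⟩
  · have := Measure.InnerRegular.map_of_continuous (μ := μ) continuous_gq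
    have := Measure.InnerRegular.map_of_continuous (μ := ν) continuous_gq
    refine Measure.ext_of_integral_eq_on_dense dense_gDiff fun f ⟨g, hg, k, hk, hf⟩ => ?_
    rw [integral_map_gq_of_mem_gDiff μ hg hk hf, integral_map_gq_of_mem_gDiff ν hg hk hf,
      h g hg, h k hk]
  · simpa only [integral_map_gq, GSet.lift_gq] using
      congr_arg (fun m => ∫ t, GSet.lift hg t ∂m) h

theorem stmt8 {M : Type*} [MetricSpace M]
    [MeasurableSpace (StoneCech (Wt M))] [BorelSpace (StoneCech (Wt M))]
    [MeasurableSpace (Quotient (gSetoid M))] [BorelSpace (Quotient (gSetoid M))]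
    (h3 : ∃ x y z : M, x ≠ y ∧ x ≠ z ∧ y ≠ z)
    (μ ν : Measure (StoneCech (Wt M)))
    [IsFiniteMeasure μ] [IsFiniteMeasure ν] [μ.InnerRegular] [ν.InnerRegular] :
    (Preceq μ ν ∧ Preceq ν μ) ↔ Measure.map (gq M) μ = Measure.map (gq M) ν :=
  stmt8_general μ ν
end

section
/- Let D : K → [0,∞] be the unique continuous extension of the distance function, i.e. the continuous map into the compact space [0,∞] (equivalently ℝ≥0∞) with D(ι(x,y)) = d(x,y) for all (x,y) ∈ W. If μ, ν are finite positive Radon Borel measures on K with μ ≼ ν, then μ(D⁻¹{0}) ≤ ν(D⁻¹{0}); consequently, if ν is concentrated on D⁻¹((0,∞]) (i.e. ν(D⁻¹{0}) = 0), then μ is concentrated on D⁻¹((0,∞]) as well. -/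
/-!
The functions `g_ε = min 1 (ε / D)` belong to `G`: on `W` one has `d · g_ε ∘ d = min d ε`, and
truncation at `ε` preserves the triangle inequality. They are bounded by `1`, equal `1` on
`D⁻¹{0}` and tend to `0` elsewhere as `ε → 0⁺`. Hence
`μ(D⁻¹{0}) ≤ ∫ g_ε dμ ≤ ∫ g_ε dν → ν(D⁻¹{0})` by dominated convergence.
-/

open MeasureTheory

open Filter Topology ENNReal

noncomputable def truncInv (ε : ℝ) (t : ℝ≥0∞) : ℝ :=
  truncateToReal 1 (ENNReal.ofReal ε / t)

lemma truncInv_nonneg (ε : ℝ) (t : ℝ≥0∞) : 0 ≤ truncInv ε t := truncateToReal_nonneg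

lemma truncInv_le_one (ε : ℝ) (t : ℝ≥0∞) : truncInv ε t ≤ 1 := by
  simpa [truncInv] using truncateToReal_le one_ne_top (x := ENNReal.ofReal ε / t)

lemma norm_truncInv_le_one (ε : ℝ) (t : ℝ≥0∞) : ‖truncInv ε t‖ ≤ 1 := by
  rw [Real.norm_of_nonneg (truncInv_nonneg ε t)]
  exact truncInv_le_one ε t

lemma truncInv_zero {ε : ℝ} (hε : 0 < ε) : truncInv ε 0 = 1 := by
  simp [truncInv, truncateToReal, ENNReal.div_zero (ENNReal.ofReal_pos.mpr hε).ne']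

lemma continuous_truncInv (ε : ℝ) : Continuous (truncInv ε) :=
  (continuous_truncateToReal one_ne_top).comp
    ((ENNReal.continuous_const_mul ofReal_ne_top).comp continuous_inv)

lemma mul_truncInv_ofReal {ε s : ℝ} (hε : 0 < ε) (hs : 0 < s) :
    s * truncInv ε (ENNReal.ofReal s) = min s ε := by
  rw [truncInv, truncateToReal, ← ENNReal.ofReal_div_of_pos hs, ← ENNReal.ofReal_one,
    ← ENNReal.ofReal_min, ENNReal.toReal_ofReal (le_min zero_le_one (by positivity)),
    mul_min_of_nonneg _ _ hs.le, mul_one, mul_div_cancel₀ _ hs.ne']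

lemma min_le_min_add_min {a b c e : ℝ} (habc : a ≤ b + c) (hb : 0 ≤ b) (hc : 0 ≤ c)
    (he : 0 ≤ e) : min a e ≤ min b e + min c e := by
  simp only [min_def]
  split_ifs <;> linarith

lemma tendsto_truncInv (t : ℝ≥0∞) :
    Tendsto (truncInv · t) (𝓝[>] 0) (𝓝 (({0} : Set ℝ≥0∞).indicator 1 t)) := by
  rcases eq_or_ne t 0 with rfl | ht
  · rw [Set.indicator_of_mem (Set.mem_singleton 0)]
    exact tendsto_const_nhds.congr'
      (eventually_nhdsWithin_of_forall fun ε hε => (truncInv_zero hε).symm)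
  · rw [Set.indicator_of_notMem (Set.notMem_singleton_iff.mpr ht)]
    have hcont : Continuous (truncInv · t) :=
      (continuous_truncateToReal one_ne_top).comp
        ((ENNReal.continuous_mul_const (ENNReal.inv_ne_top.mpr ht)).comp ENNReal.continuous_ofReal)
    simpa [truncInv, truncateToReal] using (hcont.tendsto 0).mono_left nhdsWithin_le_nhds

section Measure

variable {X : Type*} [TopologicalSpace X] [MeasurableSpace X] [OpensMeasurableSpace X]
  {D : X → ℝ≥0∞}

lemma integrable_truncInv_comp (hD : Continuous D) (μ : Measure X) [IsFiniteMeasure μ]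
    (ε : ℝ) : Integrable (fun x => truncInv ε (D x)) μ :=
  .of_bound ((continuous_truncInv ε).comp hD).aestronglyMeasurable 1 <|
    .of_forall fun x => norm_truncInv_le_one ε (D x)

lemma measureReal_preimage_zero_le_integral_truncInv (hD : Continuous D) (μ : Measure X)
    [IsFiniteMeasure μ] {ε : ℝ} (hε : 0 < ε) :
    μ.real (D ⁻¹' {0}) ≤ ∫ x, truncInv ε (D x) ∂μ :=
  calc μ.real (D ⁻¹' {0}) = ∫ x in D ⁻¹' {0}, truncInv ε (D x) ∂μ := by
        rw [setIntegral_congr_fun (hD.measurable (measurableSet_singleton 0))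
          (fun x (hx : D x = 0) => by rw [hx, truncInv_zero hε]), setIntegral_const, smul_eq_mul,
          mul_one]
    _ ≤ ∫ x, truncInv ε (D x) ∂μ :=
        setIntegral_le_integral (integrable_truncInv_comp hD μ ε)
          (.of_forall fun x => truncInv_nonneg ε (D x))

lemma tendsto_integral_truncInv (hD : Continuous D) (μ : Measure X) [IsFiniteMeasure μ] :
    Tendsto (fun ε => ∫ x, truncInv ε (D x) ∂μ) (𝓝[>] 0) (𝓝 (μ.real (D ⁻¹' {0}))) := by
  have hind : ∀ x, (D ⁻¹' {0}).indicator (1 : X → ℝ) x = ({0} : Set ℝ≥0∞).indicator 1 (D x) :=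
    fun _ => rfl
  rw [← integral_indicator_one (hD.measurable (measurableSet_singleton 0))]
  simp only [hind]
  refine tendsto_integral_filter_of_dominated_convergence (fun _ => 1)
    (.of_forall fun ε => ((continuous_truncInv ε).comp hD).aestronglyMeasurable)
    (.of_forall fun ε => .of_forall fun x => norm_truncInv_le_one ε (D x)) (integrable_const 1)
    (.of_forall fun x => tendsto_truncInv (D x))

end Measure

lemma mem_GSet_truncInv {M : Type*} [MetricSpace M] {D : StoneCech (Wt M) → ℝ≥0∞}
    (hD : Continuous D)
    (hDext : ∀ p : Wt M, D (stoneCechUnit p) = ENNReal.ofReal (dist p.1.1 p.1.2))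
    {ε : ℝ} (hε : 0 < ε) : (fun ζ => truncInv ε (D ζ)) ∈ GSet M := by
  refine ⟨(continuous_truncInv ε).comp hD, fun x u y hxu huy hxy => ?_⟩
  simp only [hDext]
  rw [mul_truncInv_ofReal hε (dist_pos.mpr hxy), mul_truncInv_ofReal hε (dist_pos.mpr hxu),
    mul_truncInv_ofReal hε (dist_pos.mpr huy)]
  exact min_le_min_add_min (dist_triangle x u y) dist_nonneg dist_nonneg hε.le

theorem stmt11_general {M : Type*} [MetricSpace M]
    [MeasurableSpace (StoneCech (Wt M))] [BorelSpace (StoneCech (Wt M))]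
    (D : StoneCech (Wt M) → ENNReal) (hD : Continuous D)
    (hDext : ∀ p : Wt M, D (stoneCechUnit p) = ENNReal.ofReal (dist p.1.1 p.1.2))
    (μ ν : Measure (StoneCech (Wt M)))
    [IsFiniteMeasure μ] [IsFiniteMeasure ν]
    (hle : Preceq μ ν) :
    μ (D ⁻¹' {0}) ≤ ν (D ⁻¹' {0}) ∧ (ν (D ⁻¹' {0}) = 0 → μ (D ⁻¹' {0}) = 0) := by
  have hreal : μ.real (D ⁻¹' {0}) ≤ ν.real (D ⁻¹' {0}) :=
    ge_of_tendsto (tendsto_integral_truncInv hD ν) <|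
      eventually_nhdsWithin_of_forall fun ε (hε : 0 < ε) =>
        (measureReal_preimage_zero_le_integral_truncInv hD μ hε).trans
          (hle _ (mem_GSet_truncInv hD hDext hε))
  have hμν : μ (D ⁻¹' {0}) ≤ ν (D ⁻¹' {0}) :=
    (toReal_le_toReal (measure_ne_top μ _) (measure_ne_top ν _)).mp hreal
  exact ⟨hμν, fun hν => nonpos_iff_eq_zero.mp (hμν.trans_eq hν)⟩

theorem stmt11 {M : Type*} [MetricSpace M]
    [MeasurableSpace (StoneCech (Wt M))] [BorelSpace (StoneCech (Wt M))]
    (h3 : ∃ x y z : M, x ≠ y ∧ x ≠ z ∧ y ≠ z)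
    (D : StoneCech (Wt M) → ENNReal) (hD : Continuous D)
    (hDext : ∀ p : Wt M, D (stoneCechUnit p) = ENNReal.ofReal (dist p.1.1 p.1.2))
    (μ ν : Measure (StoneCech (Wt M)))
    [IsFiniteMeasure μ] [IsFiniteMeasure ν] [μ.InnerRegular] [ν.InnerRegular]
    (hle : Preceq μ ν) :
    μ (D ⁻¹' {0}) ≤ ν (D ⁻¹' {0}) ∧ (ν (D ⁻¹' {0}) = 0 → μ (D ⁻¹' {0}) = 0) :=
  stmt11_general D hD hDext μ ν hle
end

section
/- For every finite positive Radon Borel measure ν on K there exists a minimal finite positive Radon Borel measure μ on K with μ ≼ ν. -/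
/-! By Zorn's lemma it suffices that every nonempty `≼`-chain of measures below `ν` has a lower
bound. Take an ultrafilter refining the tail filter of the chain. Since `1 ∈ G`, the masses are
bounded by that of `ν`, so the integral of every continuous function converges along the
ultrafilter; the limit functional is positive and linear, hence by the Riesz–Markov–Kakutani
theorem it is integration against a finite regular measure. Integrals of functions in `G`
decrease along the chain, so this measure lies below each of its members. -/

open MeasureTheory

open Filter Topology Set CompactlySupported

lemma Ultrafilter.exists_tendsto_of_abs_le {ι : Type*} (U : Ultrafilter ι) {φ : ι → ℝ} {B : ℝ}
    (hφ : ∀ i, |φ i| ≤ B) : ∃ L, Tendsto φ U (𝓝 L) := by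
  have hmem : ((U.map φ : Ultrafilter ℝ) : Filter ℝ) ≤ 𝓟 (Metric.closedBall 0 B) := by
    rw [le_principal_iff, Ultrafilter.coe_map, Filter.mem_map]
    exact univ_mem' fun i => mem_closedBall_zero_iff.2 (hφ i)
  obtain ⟨L, -, hL⟩ := (isCompact_closedBall 0 B).ultrafilter_le_nhds _ hmem
  exact ⟨L, hL⟩

lemma IsChain.exists_ultrafilter_eventually {α : Type*} {r : α → α → Prop}
    (hrefl : ∀ a, r a a) (htrans : ∀ {a b c}, r a b → r b c → r a c) {c : Set α}
    (hc : IsChain r c) (hne : c.Nonempty) :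
    ∃ U : Ultrafilter α, ∀ a ∈ c, ∀ᶠ b in (U : Filter α), r a b := by
  have : Std.Refl r := ⟨hrefl⟩
  have : Nonempty c := hne.to_subtype
  let F : Filter α := ⨅ a : c, 𝓟 {b | r a b}
  have hdir : Directed (· ≥ ·) fun a : c => 𝓟 {b | r a b} := by
    intro a a'
    obtain ⟨b, hb, hab, ha'b⟩ := hc.directedOn a a.2 a' a'.2
    exact ⟨⟨b, hb⟩, principal_mono.2 fun x hx => htrans hab hx,
      principal_mono.2 fun x hx => htrans ha'b hx⟩
  have : F.NeBot := iInf_neBot_of_directed' hdir fun a =>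
    principal_neBot_iff.2 ⟨a, hrefl a⟩
  exact ⟨Ultrafilter.of F, fun a ha =>
    Ultrafilter.of_le F (mem_iInf_of_mem ⟨a, ha⟩ (mem_principal_self _))⟩

section WeakStarCompactness

variable {X : Type*} [TopologicalSpace X] [CompactSpace X] [T2Space X]
  [MeasurableSpace X] [BorelSpace X]

theorem exists_measure_tendsto_integral {ι : Type*} (U : Ultrafilter ι) (μ : ι → Measure X)
    [∀ i, IsFiniteMeasure (μ i)] {C : ℝ} (hC : ∀ i, (μ i).real univ ≤ C) :
    ∃ m : Measure X, IsFiniteMeasure m ∧ m.InnerRegular ∧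
      ∀ f : C(X, ℝ), Tendsto (fun i => ∫ x, f x ∂μ i) U (𝓝 (∫ x, f x ∂m)) := by
  have hlim (f : C_c(X, ℝ)) : ∃ L, Tendsto (fun i => ∫ x, f x ∂μ i) U (𝓝 L) := by
    let fb := BoundedContinuousFunction.mkOfCompact (f : C(X, ℝ))
    refine U.exists_tendsto_of_abs_le (B := C * ‖fb‖) fun i => ?_
    calc |∫ x, f x ∂μ i| = ‖∫ x, fb x ∂μ i‖ := rfl
      _ ≤ (μ i).real univ * ‖fb‖ := BoundedContinuousFunction.norm_integral_le_mul_norm _ fb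
      _ ≤ C * ‖fb‖ := by gcongr; exact hC i
  choose L hL using hlim
  let Λ : C_c(X, ℝ) →ₚ[ℝ] ℝ :=
    { toFun := L
      map_add' := fun f g => tendsto_nhds_unique (hL _) <| by
        simpa only [CompactlySupportedContinuousMap.coe_add, Pi.add_apply,
          integral_add f.integrable g.integrable] using (hL f).add (hL g)
      map_smul' := fun c f => tendsto_nhds_unique (hL _) <| by
        simpa only [CompactlySupportedContinuousMap.coe_smul, Pi.smul_apply, integral_smul,
          RingHom.id_apply] using (hL f).const_smul c
      monotone' := fun f g hfg => le_of_tendsto_of_tendsto' (hL f) (hL g) fun i =>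
        integral_mono f.integrable g.integrable hfg }
  refine ⟨RealRMK.rieszMeasure Λ, inferInstance, inferInstance, fun f => ?_⟩
  let fc : C_c(X, ℝ) := ⟨f, HasCompactSupport.of_compactSpace f⟩
  exact (RealRMK.integral_rieszMeasure Λ fc).symm ▸ hL fc

end WeakStarCompactness

section IntegralsLE

variable {X : Type*} [MeasurableSpace X]

def IntegralsLE (𝒢 : Set (X → ℝ)) (μ ν : Measure X) : Prop :=
  ∀ g ∈ 𝒢, ∫ x, g x ∂μ ≤ ∫ x, g x ∂ν

variable {𝒢 : Set (X → ℝ)}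

theorem IntegralsLE.refl (μ : Measure X) : IntegralsLE 𝒢 μ μ := fun _ _ => le_rfl

theorem IntegralsLE.trans {μ ρ σ : Measure X} (h₁ : IntegralsLE 𝒢 μ ρ) (h₂ : IntegralsLE 𝒢 ρ σ) :
    IntegralsLE 𝒢 μ σ := fun g hg => (h₁ g hg).trans (h₂ g hg)

theorem IntegralsLE.measureReal_univ_le (hone : 1 ∈ 𝒢) {μ ν : Measure X}
    (h : IntegralsLE 𝒢 μ ν) : μ.real univ ≤ ν.real univ := by
  simpa using h 1 hone

variable [TopologicalSpace X] [CompactSpace X] [T2Space X] [BorelSpace X]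

theorem exists_integralsLE_of_isChain (h𝒢 : ∀ g ∈ 𝒢, Continuous g) {ι : Type*}
    (μ : ι → Measure X) [∀ i, IsFiniteMeasure (μ i)] {C : ℝ} (hC : ∀ i, (μ i).real univ ≤ C)
    {c : Set ι} (hc : IsChain (fun i j => IntegralsLE 𝒢 (μ j) (μ i)) c) (hne : c.Nonempty) :
    ∃ m : Measure X, IsFiniteMeasure m ∧ m.InnerRegular ∧ ∀ i ∈ c, IntegralsLE 𝒢 m (μ i) := by
  obtain ⟨U, hU⟩ := hc.exists_ultrafilter_eventually (fun i => IntegralsLE.refl (μ i))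
    (fun hij hjk => hjk.trans hij) hne
  obtain ⟨m, hm_fin, hm_reg, hm⟩ := exists_measure_tendsto_integral U μ hC
  refine ⟨m, hm_fin, hm_reg, fun i hi g hg => ?_⟩
  exact le_of_tendsto (hm ⟨g, h𝒢 g hg⟩) ((hU i hi).mono fun j hj => hj g hg)

theorem exists_minimal_integralsLE (h𝒢 : ∀ g ∈ 𝒢, Continuous g) (hone : 1 ∈ 𝒢)
    (ν : Measure X) [IsFiniteMeasure ν] [ν.InnerRegular] :
    ∃ μ : Measure X, IsFiniteMeasure μ ∧ μ.InnerRegular ∧ IntegralsLE 𝒢 μ ν ∧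
      ∀ ρ : Measure X, IsFiniteMeasure ρ → ρ.InnerRegular → IntegralsLE 𝒢 ρ μ →
        IntegralsLE 𝒢 μ ρ := by
  let S := {μ : Measure X // IsFiniteMeasure μ ∧ μ.InnerRegular ∧ IntegralsLE 𝒢 μ ν}
  have : ∀ μ : S, IsFiniteMeasure μ.1 := fun μ => μ.2.1
  have hchain (c : Set S) (hc : IsChain (fun μ ρ : S => IntegralsLE 𝒢 ρ.1 μ.1) c) :
      ∃ m : S, ∀ μ ∈ c, IntegralsLE 𝒢 m.1 μ.1 := by
    obtain rfl | hne := c.eq_empty_or_nonempty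
    · exact ⟨⟨ν, inferInstance, inferInstance, .refl ν⟩, by simp⟩
    obtain ⟨m, hm_fin, hm_reg, hm⟩ := exists_integralsLE_of_isChain h𝒢 Subtype.val
      (fun μ => μ.2.2.2.measureReal_univ_le hone) hc hne
    obtain ⟨μ₀, hμ₀⟩ := hne
    exact ⟨⟨m, hm_fin, hm_reg, (hm μ₀ hμ₀).trans μ₀.2.2.2⟩, hm⟩
  obtain ⟨μ, hμ⟩ := exists_maximal_of_chains_bounded hchain fun h₁ h₂ => h₂.trans h₁
  exact ⟨μ.1, μ.2.1, μ.2.2.1, μ.2.2.2, fun ρ hρ_fin hρ_reg hρμ =>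
    hμ ⟨ρ, hρ_fin, hρ_reg, hρμ.trans μ.2.2.2⟩ hρμ⟩

end IntegralsLE

theorem one_mem_GSet (M : Type*) [MetricSpace M] : 1 ∈ GSet M :=
  ⟨continuous_const, fun x u y _ _ _ => by simpa using dist_triangle x u y⟩

theorem stmt13_general {M : Type*} [MetricSpace M]
    [MeasurableSpace (StoneCech (Wt M))] [BorelSpace (StoneCech (Wt M))]
    (ν : Measure (StoneCech (Wt M))) [IsFiniteMeasure ν] [ν.InnerRegular] :
    ∃ μ : Measure (StoneCech (Wt M)),
      IsFiniteMeasure μ ∧ μ.InnerRegular ∧ IsMinimal μ ∧ Preceq μ ν := by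
  obtain ⟨μ, hμ_fin, hμ_reg, hμν, hμ_min⟩ :=
    exists_minimal_integralsLE (fun g hg => hg.1) (one_mem_GSet M) ν
  exact ⟨μ, hμ_fin, hμ_reg, hμ_min, hμν⟩

theorem stmt13 {M : Type*} [MetricSpace M]
    [MeasurableSpace (StoneCech (Wt M))] [BorelSpace (StoneCech (Wt M))]
    (h3 : ∃ x y z : M, x ≠ y ∧ x ≠ z ∧ y ≠ z)
    (ν : Measure (StoneCech (Wt M))) [IsFiniteMeasure ν] [ν.InnerRegular] :
    ∃ μ : Measure (StoneCech (Wt M)),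
      IsFiniteMeasure μ ∧ μ.InnerRegular ∧ IsMinimal μ ∧ Preceq μ ν :=
  stmt13_general ν
end

section
/- Let μ be a minimal finite positive Radon Borel measure on K. Then: (i) c·μ is minimal for every c ≥ 0; (ii) if λ is a finite positive Radon Borel measure on K with 0 ≤ λ ≤ μ (as measures), then λ is minimal; (iii) for every Borel set E ⊆ K, the restriction μ|E is minimal. -/
open MeasureTheory

/-! The order `≼` only sees integrals of continuous functions on the compact space `K`, which are
finite and additive and homogeneous in the measure. Hence `≼` is invariant under positive scaling
and under adding a common finite measure `ρ`. If `λ ≤ μ` and `ν ≼ λ`, then `ν + (μ - λ) ≼ μ`, so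
minimality of `μ` gives `μ ≼ ν + (μ - λ)`, and cancelling `μ - λ` yields `λ ≼ ν`. Restrictions
are the case `λ = μ|E`, and `c • μ` is minimal by scaling (`c > 0`) or as `0 ≤ μ` (`c = 0`).
The test measure `ν + (μ - λ)` is again inner regular because inner regularity of a finite
measure passes to every smaller measure. -/

theorem MeasureTheory.Measure.InnerRegular.of_le {α : Type*} [TopologicalSpace α]
    [MeasurableSpace α] [T2Space α] [OpensMeasurableSpace α] {μ ν : Measure α}
    [IsFiniteMeasure μ] [μ.InnerRegular] (h : ν ≤ μ) : ν.InnerRegular := by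
  refine ⟨fun U hU r hr => ?_⟩
  obtain ⟨K, hKU, hK, hμK⟩ :=
    hU.exists_isCompact_sdiff_lt (measure_ne_top μ U) (tsub_pos_of_lt hr).ne'
  refine ⟨K, hKU, hK, ?_⟩
  refine lt_of_tsub_lt_tsub_left (a := ν U) ?_
  calc ν U - ν K ≤ ν (U \ K) := le_measure_sdiff
    _ ≤ μ (U \ K) := h _
    _ < ν U - r := hμK

section Preceq

variable {M : Type*} [MetricSpace M] [MeasurableSpace (StoneCech (Wt M))]

theorem integrable_of_mem_GSet [OpensMeasurableSpace (StoneCech (Wt M))]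
    {g : StoneCech (Wt M) → ℝ} (hg : g ∈ GSet M) (μ : Measure (StoneCech (Wt M)))
    [IsFiniteMeasure μ] : Integrable g μ :=
  hg.1.integrable_of_hasCompactSupport (HasCompactSupport.of_compactSpace g)

theorem preceq_add_right_iff [OpensMeasurableSpace (StoneCech (Wt M))]
    {μ ν : Measure (StoneCech (Wt M))} (ρ : Measure (StoneCech (Wt M)))
    [IsFiniteMeasure μ] [IsFiniteMeasure ν] [IsFiniteMeasure ρ] :
    Preceq (ν + ρ) (μ + ρ) ↔ Preceq ν μ := by
  refine forall₂_congr fun g hg => ?_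
  rw [integral_add_measure (integrable_of_mem_GSet hg ν) (integrable_of_mem_GSet hg ρ),
    integral_add_measure (integrable_of_mem_GSet hg μ) (integrable_of_mem_GSet hg ρ),
    add_le_add_iff_right]

theorem preceq_smul_iff {μ ν : Measure (StoneCech (Wt M))} {c : NNReal} (hc : c ≠ 0) :
    Preceq (c • ν) (c • μ) ↔ Preceq ν μ := by
  refine forall₂_congr fun g _ => ?_
  simp only [integral_smul_nnreal_measure, NNReal.smul_def, smul_eq_mul]
  exact mul_le_mul_iff_right₀ (NNReal.coe_pos.2 (pos_iff_ne_zero.2 hc))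

variable [BorelSpace (StoneCech (Wt M))] {μ : Measure (StoneCech (Wt M))}
  [IsFiniteMeasure μ] [μ.InnerRegular]

theorem IsMinimal.of_le (hmin : IsMinimal μ) {lam : Measure (StoneCech (Wt M))}
    (hle : lam ≤ μ) : IsMinimal lam := by
  intro ν _ _ hνlam
  set ρ := μ - lam
  have : IsFiniteMeasure lam := isFiniteMeasure_of_le μ hle
  have : IsFiniteMeasure ρ := isFiniteMeasure_of_le μ Measure.sub_le
  have : ρ.InnerRegular := Measure.InnerRegular.of_le Measure.sub_le
  have hsum : lam + ρ = μ := by rw [add_comm, Measure.sub_add_cancel_of_le hle]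
  have hνμ : Preceq (ν + ρ) μ := hsum ▸ (preceq_add_right_iff ρ).2 hνlam
  exact (preceq_add_right_iff ρ).1 (hsum ▸ hmin _ inferInstance inferInstance hνμ)

theorem IsMinimal.smul (hmin : IsMinimal μ) (c : NNReal) : IsMinimal (c • μ) := by
  rcases eq_or_ne c 0 with rfl | hc
  · exact hmin.of_le (by rw [zero_smul]; exact Measure.zero_le μ)
  intro ν _ _ hνμ
  have hcancel : c • c⁻¹ • ν = ν := by rw [smul_smul, mul_inv_cancel₀ hc, one_smul]
  have hνμ' : Preceq (c⁻¹ • ν) μ := (preceq_smul_iff hc).1 (hcancel.symm ▸ hνμ)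
  exact hcancel ▸ (preceq_smul_iff hc).2 (hmin _ inferInstance inferInstance hνμ')

end Preceq

theorem stmt14_general {M : Type*} [MetricSpace M]
    [MeasurableSpace (StoneCech (Wt M))] [BorelSpace (StoneCech (Wt M))]
    (μ : Measure (StoneCech (Wt M))) [IsFiniteMeasure μ] [μ.InnerRegular]
    (hmin : IsMinimal μ) :
    (∀ c : NNReal, IsMinimal (c • μ)) ∧
    (∀ lam : Measure (StoneCech (Wt M)), IsFiniteMeasure lam → lam.InnerRegular →
      lam ≤ μ → IsMinimal lam) ∧
    (∀ E : Set (StoneCech (Wt M)), MeasurableSet E → IsMinimal (μ.restrict E)) :=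
  ⟨hmin.smul, fun _ _ _ hle => hmin.of_le hle, fun _ _ => hmin.of_le Measure.restrict_le_self⟩

theorem stmt14 {M : Type*} [MetricSpace M]
    [MeasurableSpace (StoneCech (Wt M))] [BorelSpace (StoneCech (Wt M))]
    (h3 : ∃ x y z : M, x ≠ y ∧ x ≠ z ∧ y ≠ z)
    (μ : Measure (StoneCech (Wt M))) [IsFiniteMeasure μ] [μ.InnerRegular]
    (hmin : IsMinimal μ) :
    (∀ c : NNReal, IsMinimal (c • μ)) ∧
    (∀ lam : Measure (StoneCech (Wt M)), IsFiniteMeasure lam → lam.InnerRegular →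
      lam ≤ μ → IsMinimal lam) ∧
    (∀ E : Set (StoneCech (Wt M)), MeasurableSet E → IsMinimal (μ.restrict E)) :=
  stmt14_general μ hmin
end

section
/- Suppose γ(M) > 1 and write γ = γ(M). Then for every continuous function f : K → ℝ, the function f + a·1_K belongs to G, where a = ((γ+1)/(γ−1))·‖f‖∞ and ‖f‖∞ = sup_{ζ∈K} |f(ζ)|. -/
open MeasureTheory

/-- The concavity modulus `γ(M)`. -/
noncomputable def gammaM (M : Type*) [MetricSpace M] : ℝ :=
  sInf {r : ℝ | ∃ x u y : M, x ≠ u ∧ u ≠ y ∧ x ≠ y ∧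
    r = (dist x u + dist u y) / dist x y}

theorem stmt16 {M : Type*} [MetricSpace M]
    (h3 : ∃ x y z : M, x ≠ y ∧ x ≠ z ∧ y ≠ z)
    (hγ : 1 < gammaM M) (f : StoneCech (Wt M) → ℝ) (hf : Continuous f) :
    (fun ζ => f ζ + ((gammaM M + 1) / (gammaM M - 1)) * ⨆ ω : StoneCech (Wt M), |f ω|)
      ∈ GSet M := by
  obtain ⟨x0, y0, z0, hxy0, -, -⟩ := h3
  have hne : Nonempty (StoneCech (Wt M)) := ⟨stoneCechUnit ⟨(x0, y0), hxy0⟩⟩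
  set γ := gammaM M with hγdef
  set a : ℝ := (γ + 1) / (γ - 1) with hadef
  set s : ℝ := ⨆ ω : StoneCech (Wt M), |f ω| with hsdef
  have hbdd : BddAbove (Set.range fun ω : StoneCech (Wt M) => |f ω|) :=
    (isCompact_range hf.abs).bddAbove
  have habs : ∀ ζ, |f ζ| ≤ s := fun ζ => le_ciSup hbdd ζ
  have hs0 : 0 ≤ s := le_trans (abs_nonneg _) (habs hne.some)
  have hγ1 : (0:ℝ) < γ - 1 := by linarith
  have ha : a * (γ - 1) = γ + 1 := div_mul_cancel₀ _ (ne_of_gt hγ1)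
  have ha1 : 1 ≤ a := by
    rw [hadef, le_div_iff₀ hγ1]; linarith
  refine ⟨hf.add continuous_const, ?_⟩
  intro x u y hxu huy hxy
  have h1 : 0 < dist x y := dist_pos.2 hxy
  have h2 : 0 < dist x u := dist_pos.2 hxu
  have h3' : 0 < dist u y := dist_pos.2 huy
  have hγle : γ ≤ (dist x u + dist u y) / dist x y := by
    apply csInf_le
    · refine ⟨1, ?_⟩
      rintro r ⟨p, q, w, hpq, hqw, hpw, rfl⟩
      rw [le_div_iff₀ (dist_pos.2 hpw)]
      simpa using dist_triangle p q w
    · exact ⟨x, u, y, hxu, huy, hxy, rfl⟩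
  have hratio : γ * dist x y ≤ dist x u + dist u y := by
    rwa [← le_div_iff₀ h1]
  have key : (a - 1) * s * (γ * dist x y) ≤ (a - 1) * s * (dist x u + dist u y) :=
    mul_le_mul_of_nonneg_left hratio (mul_nonneg (by linarith) hs0)
  have key' : (a + 1) * s * dist x y ≤ (a - 1) * s * (dist x u + dist u y) := by
    have e : (a - 1) * γ = a + 1 := by nlinarith [ha]
    calc (a + 1) * s * dist x y = (a - 1) * s * (γ * dist x y) := by
          rw [← e]; ring
      _ ≤ _ := key
  have b1 := (abs_le.1 (habs (stoneCechUnit ⟨(x, y), hxy⟩))).2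
  have b2 := (abs_le.1 (habs (stoneCechUnit ⟨(x, u), hxu⟩))).1
  have b3 := (abs_le.1 (habs (stoneCechUnit ⟨(u, y), huy⟩))).1
  have p1 : dist x y * f (stoneCechUnit ⟨(x, y), hxy⟩) ≤ dist x y * s :=
    mul_le_mul_of_nonneg_left b1 h1.le
  have p2 : dist x u * (-s) ≤ dist x u * f (stoneCechUnit ⟨(x, u), hxu⟩) :=
    mul_le_mul_of_nonneg_left b2 h2.le
  have p3 : dist u y * (-s) ≤ dist u y * f (stoneCechUnit ⟨(u, y), huy⟩) :=
    mul_le_mul_of_nonneg_left b3 h3'.le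
  simp only
  nlinarith [p1, p2, p3, key']
end

section
/- Suppose γ(M) > 1. Let ν be an optimal finite positive Radon Borel measure on K, and let μ be a finite positive Radon Borel measure on K with μ ≼ ν. Then μ = ν. In particular, every optimal finite positive Radon Borel measure on K is minimal. -/
open MeasureTheory

/-- `μ` is an optimal De Leeuw representation: its total mass equals the supremum of
`∫ Φf dμ` over 1-Lipschitz functions `f` vanishing at the base point, where `Φf` is the
unique continuous extension to `βW` of `(x,y) ↦ (f x − f y)/d(x,y)`. -/
def IsOptimal {M : Type*} [MetricSpace M] [MeasurableSpace (StoneCech (Wt M))]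
    (basept : M) (μ : Measure (StoneCech (Wt M))) : Prop :=
  (μ Set.univ).toReal = sSup {r : ℝ | ∃ f : M → ℝ, LipschitzWith 1 f ∧ f basept = 0 ∧
    ∃ F : StoneCech (Wt M) → ℝ, Continuous F ∧
      (∀ p : Wt M, F (stoneCechUnit p) = (f p.1.1 - f p.1.2) / dist p.1.1 p.1.2) ∧
      r = ∫ ζ, F ζ ∂μ}

/-!
The constant `1` and, for a Lipschitz `f`, both `Φf` and `-Φf` lie in `G`; hence `μ ≼ ν`
gives `μ(K) ≤ ν(K)` and `∫ Φf dμ = ∫ Φf dν ≤ μ(K)`, so optimality of `ν` forces `μ(K) = ν(K)`.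
When `γ(M) > 1` the triangle inequalities have slack `(γ - 1) d(x,y)`, so a large constant
absorbs any continuous `h`: `C + h ∈ G`. With equal masses this yields `∫ h dμ ≤ ∫ h dν`
for every continuous `h`, hence (applied to `±h`) `μ = ν` by the uniqueness part of the
Riesz–Markov–Kakutani theorem.
-/

open Set

lemma Continuous.integrable_of_compactSpace {X : Type*} [TopologicalSpace X] [CompactSpace X]
    [MeasurableSpace X] [OpensMeasurableSpace X] {μ : Measure X} [IsFiniteMeasure μ]
    {f : X → ℝ} (hf : Continuous f) : Integrable f μ :=
  hf.integrable_of_hasCompactSupport (HasCompactSupport.of_compactSpace f)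

section GSet

variable {M : Type*} [MetricSpace M]

lemma const_one_mem_GSet : (fun _ : StoneCech (Wt M) => (1 : ℝ)) ∈ GSet M :=
  ⟨continuous_const, fun x u y _ _ _ => by simpa using dist_triangle x u y⟩

lemma gammaM_mul_dist_le {x u y : M} (hxu : x ≠ u) (huy : u ≠ y) (hxy : x ≠ y) :
    gammaM M * dist x y ≤ dist x u + dist u y := by
  have hbdd : BddBelow {r : ℝ | ∃ x u y : M, x ≠ u ∧ u ≠ y ∧ x ≠ y ∧
      r = (dist x u + dist u y) / dist x y} := by
    refine ⟨0, ?_⟩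
    rintro _ ⟨a, b, c, -, -, -, rfl⟩
    positivity
  rw [← le_div_iff₀ (dist_pos.2 hxy)]
  exact csInf_le hbdd ⟨x, u, y, hxu, huy, hxy, rfl⟩

lemma exists_const_add_mem_GSet (hγ : 1 < gammaM M) {h : StoneCech (Wt M) → ℝ}
    (hc : Continuous h) : ∃ C : ℝ, (fun ζ => C + h ζ) ∈ GSet M := by
  obtain ⟨B, hB⟩ := (isCompact_range hc).isBounded.exists_norm_le
  replace hB : ∀ ζ, |h ζ| ≤ B := fun ζ => hB _ (mem_range_self ζ)
  set γ := gammaM M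
  refine ⟨B * (γ + 1) / (γ - 1), continuous_const.add hc, fun x u y hxu huy hxy => ?_⟩
  set C := B * (γ + 1) / (γ - 1)
  have hC : γ * (C - B) = C + B := by
    simp only [C]
    field_simp [(sub_pos.2 hγ).ne']
    ring
  have hB0 : 0 ≤ B := (abs_nonneg _).trans (hB (stoneCechUnit ⟨(x, u), hxu⟩))
  have hBC : B ≤ C := by nlinarith
  obtain ⟨h₁, h₁'⟩ := abs_le.1 (hB (stoneCechUnit ⟨(x, y), hxy⟩))
  obtain ⟨h₂, -⟩ := abs_le.1 (hB (stoneCechUnit ⟨(x, u), hxu⟩))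
  obtain ⟨h₃, -⟩ := abs_le.1 (hB (stoneCechUnit ⟨(u, y), huy⟩))
  have hxu₀ := dist_nonneg (x := x) (y := u)
  have huy₀ := dist_nonneg (x := u) (y := y)
  calc dist x y * (C + h (stoneCechUnit ⟨(x, y), hxy⟩))
      ≤ dist x y * (C + B) := by gcongr
    _ = γ * dist x y * (C - B) := by rw [← hC]; ring
    _ ≤ (dist x u + dist u y) * (C - B) :=
        mul_le_mul_of_nonneg_right (gammaM_mul_dist_le hxu huy hxy) (by linarith)
    _ ≤ dist x u * (C + h (stoneCechUnit ⟨(x, u), hxu⟩)) +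
        dist u y * (C + h (stoneCechUnit ⟨(u, y), huy⟩)) := by nlinarith

variable {f : M → ℝ} {F : StoneCech (Wt M) → ℝ}

lemma deLeeuw_mem_GSet (hFc : Continuous F)
    (hFf : ∀ p : Wt M, F (stoneCechUnit p) = (f p.1.1 - f p.1.2) / dist p.1.1 p.1.2) :
    F ∈ GSet M ∧ (fun ζ => -F ζ) ∈ GSet M := by
  have hcancel (x y : M) (hxy : x ≠ y) :
      dist x y * F (stoneCechUnit ⟨(x, y), hxy⟩) = f x - f y := by
    rw [hFf ⟨(x, y), hxy⟩]
    exact mul_div_cancel₀ _ (dist_ne_zero.2 hxy)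
  refine ⟨⟨hFc, fun x u y hxu huy hxy => ?_⟩, ⟨hFc.neg, fun x u y hxu huy hxy => ?_⟩⟩
  · rw [hcancel x y, hcancel x u, hcancel u y]
    linarith
  · simp only [mul_neg, hcancel]
    linarith

lemma deLeeuw_le_one (hf : LipschitzWith 1 f) (hFc : Continuous F)
    (hFf : ∀ p : Wt M, F (stoneCechUnit p) = (f p.1.1 - f p.1.2) / dist p.1.1 p.1.2)
    (ζ : StoneCech (Wt M)) : F ζ ≤ 1 := by
  refine denseRange_stoneCechUnit.induction_on ζ (isClosed_le hFc continuous_const) fun p => ?_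
  rw [hFf p, div_le_one (dist_pos.2 p.2)]
  simpa [Real.dist_eq] using (le_abs_self _).trans (hf.dist_le_mul p.1.1 p.1.2)

end GSet

section Preceq

variable {M : Type*} [MetricSpace M] [MeasurableSpace (StoneCech (Wt M))]
  {μ ν : Measure (StoneCech (Wt M))}

lemma Preceq.measureReal_univ_le (hle : Preceq μ ν) : μ.real univ ≤ ν.real univ := by
  simpa using hle _ const_one_mem_GSet

lemma Preceq.integral_eq_of_neg_mem (hle : Preceq μ ν) {g : StoneCech (Wt M) → ℝ}
    (hg : g ∈ GSet M) (hg' : (fun ζ => -g ζ) ∈ GSet M) : ∫ ζ, g ζ ∂μ = ∫ ζ, g ζ ∂ν := by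
  have := hle _ hg'
  rw [integral_neg, integral_neg] at this
  exact (hle g hg).antisymm (neg_le_neg_iff.1 this)

lemma IsOptimal.measureReal_univ_le_of_preceq [BorelSpace (StoneCech (Wt M))]
    [IsFiniteMeasure μ] {basept : M} (hopt : IsOptimal basept ν)
    (hle : Preceq μ ν) : ν.real univ ≤ μ.real univ := by
  rw [Measure.real, hopt]
  refine Real.sSup_le ?_ measureReal_nonneg
  rintro _ ⟨f, hf, -, F, hFc, hFf, rfl⟩
  obtain ⟨hFG, hFG'⟩ := deLeeuw_mem_GSet hFc hFf
  calc ∫ ζ, F ζ ∂ν = ∫ ζ, F ζ ∂μ := (hle.integral_eq_of_neg_mem hFG hFG').symm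
    _ ≤ ∫ _, (1 : ℝ) ∂μ :=
        integral_mono hFc.integrable_of_compactSpace (integrable_const 1)
          (deLeeuw_le_one hf hFc hFf)
    _ = μ.real univ := by simp

variable [BorelSpace (StoneCech (Wt M))] [IsFiniteMeasure μ] [IsFiniteMeasure ν]

lemma Preceq.integral_le_of_measureReal_univ_eq (hγ : 1 < gammaM M) (hle : Preceq μ ν)
    (hmass : μ.real univ = ν.real univ) {h : StoneCech (Wt M) → ℝ} (hc : Continuous h) :
    ∫ ζ, h ζ ∂μ ≤ ∫ ζ, h ζ ∂ν := by
  obtain ⟨C, hC⟩ := exists_const_add_mem_GSet hγ hc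
  have := hle _ hC
  rwa [integral_add (integrable_const C) hc.integrable_of_compactSpace,
    integral_add (integrable_const C) hc.integrable_of_compactSpace,
    integral_const, integral_const, hmass, add_le_add_iff_left] at this

lemma Preceq.eq_of_measureReal_univ_eq [μ.InnerRegular] [ν.InnerRegular]
    (hγ : 1 < gammaM M) (hle : Preceq μ ν) (hmass : μ.real univ = ν.real univ) : μ = ν :=
  Measure.ext_of_integral_eq_on_compactlySupported fun h =>
    (hle.integral_le_of_measureReal_univ_eq hγ hmass h.continuous).antisymm <| by
      simpa [integral_neg] using
        hle.integral_le_of_measureReal_univ_eq hγ hmass h.continuous.neg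

lemma IsOptimal.eq_of_preceq [μ.InnerRegular] [ν.InnerRegular] {basept : M}
    (hγ : 1 < gammaM M) (hopt : IsOptimal basept ν) (hle : Preceq μ ν) : μ = ν :=
  hle.eq_of_measureReal_univ_eq hγ <|
    hle.measureReal_univ_le.antisymm (hopt.measureReal_univ_le_of_preceq hle)

end Preceq

theorem stmt17_general {M : Type*} [MetricSpace M]
    [MeasurableSpace (StoneCech (Wt M))] [BorelSpace (StoneCech (Wt M))]
    (basept : M)
    (hγ : 1 < gammaM M)
    (ν μ : Measure (StoneCech (Wt M)))
    [IsFiniteMeasure ν] [ν.InnerRegular] [IsFiniteMeasure μ] [μ.InnerRegular]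
    (hopt : IsOptimal basept ν) (hle : Preceq μ ν) :
    μ = ν ∧ IsMinimal ν := by
  refine ⟨hopt.eq_of_preceq hγ hle, fun ν' _ _ hle' => ?_⟩
  rw [hopt.eq_of_preceq hγ hle']
  exact fun _ _ => le_rfl

theorem stmt17 {M : Type*} [MetricSpace M]
    [MeasurableSpace (StoneCech (Wt M))] [BorelSpace (StoneCech (Wt M))]
    (basept : M) (h3 : ∃ x y z : M, x ≠ y ∧ x ≠ z ∧ y ≠ z)
    (hγ : 1 < gammaM M)
    (ν μ : Measure (StoneCech (Wt M)))
    [IsFiniteMeasure ν] [ν.InnerRegular] [IsFiniteMeasure μ] [μ.InnerRegular]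
    (hopt : IsOptimal basept ν) (hle : Preceq μ ν) :
    μ = ν ∧ IsMinimal ν :=
  stmt17_general basept hγ ν μ hopt hle
end
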